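/- arXiv:0902.4784 — 5 statements merged into one kernel-verified Lean document; each statement's English description precedes it below -/
import Mathlib

section
/- Let ψ : [0, ∞) → ℝ satisfy ψ(0) = 0, and suppose that for some T > 0, β > 0 and a constant C_T ≥ 0 one has |ψ(u) − ψ(v)| ≤ C_T |u − v|^β for all 0 ≤ u, v ≤ T. Then for all γ > 0 and t > 0, sup_{0 ≤ v ≤ T} | t ∫₀^v e^{γ t (s − v)} ψ(s) ds − ψ(v)/γ | ≤ t^{−β} · (C_T / γ^{1+β}) · [Γ(β+1) + sup_{s ≥ 0} s^β e^{−s}], where Γ denotes Euler's Gamma function. -/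
/-!
Write `k = γ t`. The kernel `k e^{k(s-v)}` has mass `1 - e^{-kv}` on `[0, v]`, so
`k ∫₀^v e^{k(s-v)} ψ s ds - ψ v = ∫₀^v k e^{k(s-v)} (ψ s - ψ v) ds - e^{-kv} ψ v`.
By the Hölder bound, the integral is at most `C k ∫₀^∞ u^β e^{-ku} du = C k^{-β} Γ(β+1)`, and,
since `ψ 0 = 0`, the boundary term is at most `C v^β e^{-kv} = C k^{-β} (kv)^β e^{-kv}`.
Dividing by `γ` gives the claim.
-/

open MeasureTheory Real

theorem rpow_mul_exp_neg_le {β s : ℝ} (hβ : 0 < β) (hs : 0 ≤ s) :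
    s ^ β * exp (-s) ≤ (β * exp (-1)) ^ β := by
  calc s ^ β * exp (-s) = (β * (s / β * exp (-(s / β)))) ^ β := by
        rw [← mul_assoc, mul_div_cancel₀ s hβ.ne', mul_rpow hs (exp_pos _).le, ← exp_mul,
          neg_mul, div_mul_cancel₀ s hβ.ne']
    _ ≤ (β * exp (-1)) ^ β := by
        gcongr
        exact mul_exp_neg_le_exp_neg_one _

theorem bddAbove_range_rpow_mul_exp_neg {β : ℝ} (hβ : 0 < β) :
    BddAbove (Set.range fun s : Set.Ici (0 : ℝ) => (s : ℝ) ^ β * exp (-(s : ℝ))) :=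
  ⟨_, Set.forall_mem_range.2 fun s => rpow_mul_exp_neg_le hβ s.2⟩

theorem integral_mul_exp_mul_sub (k v : ℝ) :
    ∫ s in (0 : ℝ)..v, k * exp (k * (s - v)) = 1 - exp (-(k * v)) := by
  have hderiv : ∀ s ∈ Set.uIcc 0 v, HasDerivAt (fun s => exp (k * (s - v)))
      (k * exp (k * (s - v))) s := fun s _ => by
    simpa [mul_comm] using (((hasDerivAt_id s).sub_const v).const_mul k).exp
  rw [intervalIntegral.integral_eq_sub_of_hasDerivAt hderiv
    (Continuous.intervalIntegrable (by fun_prop) _ _)]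
  simp

theorem integral_rpow_mul_exp_neg_mul_le {β k v : ℝ} (hβ : -1 < β) (hk : 0 < k) (hv : 0 ≤ v) :
    ∫ u in (0 : ℝ)..v, u ^ β * exp (-(k * u)) ≤ (1 / k) ^ (β + 1) * Gamma (β + 1) := by
  have hint : IntegrableOn (fun u : ℝ => u ^ β * exp (-(k * u))) (Set.Ioi 0) := by
    simpa using integrableOn_rpow_mul_exp_neg_mul_rpow hβ one_pos hk
  have hGamma := integral_rpow_mul_exp_neg_mul_Ioi (by linarith : 0 < β + 1) hk
  rw [add_sub_cancel_right] at hGamma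
  rw [← hGamma, intervalIntegral.integral_of_le hv]
  refine setIntegral_mono_set hint ?_ Set.Ioc_subset_Ioi_self.eventuallyLE
  filter_upwards [ae_restrict_mem measurableSet_Ioi] with u hu
  exact mul_nonneg (rpow_nonneg (le_of_lt hu) β) (exp_pos _).le

theorem continuousOn_of_dist_le_mul_rpow {X Y : Type*} [PseudoMetricSpace X]
    [PseudoMetricSpace Y] {f : X → Y} {s : Set X} {C β : ℝ} (hβ : 0 < β)
    (hf : ∀ x ∈ s, ∀ y ∈ s, dist (f x) (f y) ≤ C * dist x y ^ β) : ContinuousOn f s := by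
  intro x hx
  rw [ContinuousWithinAt, tendsto_iff_dist_tendsto_zero]
  refine squeeze_zero' (Filter.Eventually.of_forall fun _ => dist_nonneg)
    (eventually_nhdsWithin_of_forall fun y hy => hf y hy x hx) ?_
  have hlim : Continuous fun y => C * dist y x ^ β :=
    continuous_const.mul ((continuous_id.dist continuous_const).rpow_const fun _ => Or.inr hβ.le)
  simpa [zero_rpow hβ.ne'] using hlim.continuousWithinAt (s := s) (x := x) |>.tendsto

section ExponentialKernel

variable {ψ : ℝ → ℝ} {β C k v : ℝ}

theorem abs_integral_mul_exp_mul_sub_le (hβ : 0 ≤ β) (hk : 0 < k) (hv : 0 ≤ v) (hC : 0 ≤ C)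
    (hψ : ∀ s ∈ Set.Icc 0 v, |ψ s - ψ v| ≤ C * (v - s) ^ β) :
    |∫ s in (0 : ℝ)..v, k * exp (k * (s - v)) * (ψ s - ψ v)| ≤ C * k ^ (-β) * Gamma (β + 1) := by
  have hbound :
      IntervalIntegrable (fun s => k * exp (k * (s - v)) * (C * (v - s) ^ β)) volume 0 v :=
    (Continuous.continuousOn (by fun_prop)).intervalIntegrable_of_Icc hv
  calc |∫ s in (0 : ℝ)..v, k * exp (k * (s - v)) * (ψ s - ψ v)|
      ≤ ∫ s in (0 : ℝ)..v, k * exp (k * (s - v)) * (C * (v - s) ^ β) := by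
        rw [← Real.norm_eq_abs]
        refine intervalIntegral.norm_integral_le_of_norm_le hv (ae_of_all _ fun s hs => ?_) hbound
        rw [norm_mul, Real.norm_of_nonneg (by positivity)]
        gcongr
        exact hψ s (Set.Ioc_subset_Icc_self hs)
    _ = k * C * ∫ s in (0 : ℝ)..v, (v - s) ^ β * exp (-(k * (v - s))) := by
        rw [← intervalIntegral.integral_const_mul]
        congr 1 with s
        rw [show k * (s - v) = -(k * (v - s)) by ring]
        ring
    _ = k * C * ∫ u in (0 : ℝ)..v, u ^ β * exp (-(k * u)) := by
        rw [intervalIntegral.integral_comp_sub_left (fun u => u ^ β * exp (-(k * u)))]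
        simp
    _ ≤ k * C * ((1 / k) ^ (β + 1) * Gamma (β + 1)) := by
        gcongr
        exact integral_rpow_mul_exp_neg_mul_le (by linarith) hk hv
    _ = C * k ^ (-β) * Gamma (β + 1) := by
        rw [one_div, inv_rpow hk.le, rpow_add hk, rpow_one, rpow_neg hk.le]
        field_simp

theorem exp_neg_mul_mul_rpow_le_iSup (hβ : 0 < β) (hk : 0 < k) (hv : 0 ≤ v) :
    exp (-(k * v)) * v ^ β ≤ k ^ (-β) * ⨆ s : Set.Ici (0 : ℝ), (s : ℝ) ^ β * exp (-(s : ℝ)) :=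
  calc exp (-(k * v)) * v ^ β = k ^ (-β) * ((k * v) ^ β * exp (-(k * v))) := by
        rw [mul_rpow hk.le hv, rpow_neg hk.le]
        field_simp
    _ ≤ k ^ (-β) * ⨆ s : Set.Ici (0 : ℝ), (s : ℝ) ^ β * exp (-(s : ℝ)) := by
        gcongr
        exact le_ciSup (bddAbove_range_rpow_mul_exp_neg hβ)
          (⟨k * v, mul_nonneg hk.le hv⟩ : Set.Ici (0 : ℝ))

theorem mul_integral_exp_mul_sub_sub_eq
    (hint : IntervalIntegrable (fun s => exp (k * (s - v)) * ψ s) volume 0 v) :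
    k * (∫ s in (0 : ℝ)..v, exp (k * (s - v)) * ψ s) - ψ v =
      (∫ s in (0 : ℝ)..v, k * exp (k * (s - v)) * (ψ s - ψ v)) - exp (-(k * v)) * ψ v := by
  have hsplit : ∫ s in (0 : ℝ)..v, k * exp (k * (s - v)) * (ψ s - ψ v) =
      k * (∫ s in (0 : ℝ)..v, exp (k * (s - v)) * ψ s) -
        (∫ s in (0 : ℝ)..v, k * exp (k * (s - v))) * ψ v := by
    rw [← intervalIntegral.integral_const_mul, ← intervalIntegral.integral_mul_const,
      ← intervalIntegral.integral_sub (hint.const_mul k)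
        (Continuous.intervalIntegrable (by fun_prop) _ _)]
    congr 1 with s
    ring
  rw [hsplit, integral_mul_exp_mul_sub]
  ring

theorem abs_mul_integral_exp_mul_sub_le (hβ : 0 < β) (hk : 0 < k) (hv : 0 ≤ v) (hC : 0 ≤ C)
    (hψ0 : ψ 0 = 0) (hψ : ∀ u ∈ Set.Icc 0 v, ∀ w ∈ Set.Icc 0 v, |ψ u - ψ w| ≤ C * |u - w| ^ β) :
    |k * (∫ s in (0 : ℝ)..v, exp (k * (s - v)) * ψ s) - ψ v| ≤
      C * k ^ (-β) * (Gamma (β + 1) + ⨆ s : Set.Ici (0 : ℝ), (s : ℝ) ^ β * exp (-(s : ℝ))) := by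
  have hv_mem : v ∈ Set.Icc 0 v := ⟨hv, le_rfl⟩
  have hcont : ContinuousOn ψ (Set.Icc 0 v) :=
    continuousOn_of_dist_le_mul_rpow hβ (by simpa only [Real.dist_eq] using hψ)
  have hint : IntervalIntegrable (fun s => exp (k * (s - v)) * ψ s) volume 0 v :=
    ((Continuous.continuousOn (by fun_prop)).mul hcont).intervalIntegrable_of_Icc hv
  have hkernel := abs_integral_mul_exp_mul_sub_le hβ.le hk hv hC fun s hs => by
    simpa [abs_sub_comm s, abs_of_nonneg (sub_nonneg.2 hs.2)] using hψ s hs v hv_mem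
  have hψv : |ψ v| ≤ C * v ^ β := by
    simpa [hψ0, abs_of_nonneg hv] using hψ v hv_mem 0 ⟨le_rfl, hv⟩
  rw [mul_integral_exp_mul_sub_sub_eq hint]
  calc _ ≤ |∫ s in (0 : ℝ)..v, k * exp (k * (s - v)) * (ψ s - ψ v)| + exp (-(k * v)) * |ψ v| :=
        (abs_sub _ _).trans_eq (by rw [abs_mul, abs_of_pos (exp_pos _)])
    _ ≤ C * k ^ (-β) * Gamma (β + 1) + C * (exp (-(k * v)) * v ^ β) := by
        refine add_le_add hkernel ?_
        rw [mul_left_comm]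
        exact mul_le_mul_of_nonneg_left hψv (exp_pos _).le
    _ ≤ C * k ^ (-β) * Gamma (β + 1) +
          C * (k ^ (-β) * ⨆ s : Set.Ici (0 : ℝ), (s : ℝ) ^ β * exp (-(s : ℝ))) :=
        add_le_add_right
          (mul_le_mul_of_nonneg_left (exp_neg_mul_mul_rpow_le_iSup hβ hk hv) hC) _
    _ = _ := by ring

end ExponentialKernel

theorem stmt0_general (ψ : ℝ → ℝ) (T β C_T : ℝ) (hβ : 0 < β) (hC : 0 ≤ C_T)
    (hψ0 : ψ 0 = 0)
    (hHolder : ∀ u ∈ Set.Icc (0:ℝ) T, ∀ v ∈ Set.Icc (0:ℝ) T,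
      |ψ u - ψ v| ≤ C_T * |u - v| ^ β)
    (γ t : ℝ) (hγ : 0 < γ) (ht : 0 < t) :
    ∀ v ∈ Set.Icc (0:ℝ) T,
      |t * (∫ s in (0:ℝ)..v, Real.exp (γ * t * (s - v)) * ψ s) - ψ v / γ| ≤
        t ^ (-β) * (C_T / γ ^ (1 + β)) *
          (Real.Gamma (β + 1) + ⨆ s : Set.Ici (0:ℝ), (s : ℝ) ^ β * Real.exp (-(s : ℝ))) := by
  intro v hv
  have hsub : Set.Icc 0 v ⊆ Set.Icc 0 T := Set.Icc_subset_Icc le_rfl hv.2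
  have hmain := abs_mul_integral_exp_mul_sub_le hβ (mul_pos hγ ht) hv.1 hC hψ0
    fun u hu w hw => hHolder u (hsub hu) w (hsub hw)
  have hscale : ∀ A : ℝ, t * A - ψ v / γ = (γ * t * A - ψ v) / γ := fun A => by field_simp
  rw [hscale, abs_div, abs_of_pos hγ, div_le_iff₀ hγ]
  refine hmain.trans_eq ?_
  rw [mul_rpow hγ.le ht.le, rpow_add hγ, rpow_one, rpow_neg hγ.le, rpow_neg ht.le]
  field_simp

/-- If `ψ : [0,∞) → ℝ` satisfies `ψ 0 = 0` and is Hölder of order `β` with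
constant `C_T` on `[0,T]`, then for all `γ, t > 0` and all `v ∈ [0,T]`,
`|t ∫₀^v e^{γ t (s−v)} ψ s ds − ψ v / γ| ≤ t^{−β} (C_T/γ^{1+β}) (Γ(β+1) + sup_{s ≥ 0} s^β e^{−s})`. -/
theorem stmt0 (ψ : ℝ → ℝ) (T β C_T : ℝ) (hT : 0 < T) (hβ : 0 < β) (hC : 0 ≤ C_T)
    (hψ0 : ψ 0 = 0)
    (hHolder : ∀ u ∈ Set.Icc (0:ℝ) T, ∀ v ∈ Set.Icc (0:ℝ) T,
      |ψ u - ψ v| ≤ C_T * |u - v| ^ β)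
    (γ t : ℝ) (hγ : 0 < γ) (ht : 0 < t) :
    ∀ v ∈ Set.Icc (0:ℝ) T,
      |t * (∫ s in (0:ℝ)..v, Real.exp (γ * t * (s - v)) * ψ s) - ψ v / γ| ≤
        t ^ (-β) * (C_T / γ ^ (1 + β)) *
          (Real.Gamma (β + 1) + ⨆ s : Set.Ici (0:ℝ), (s : ℝ) ^ β * Real.exp (-(s : ℝ))) :=
  stmt0_general ψ T β C_T hβ hC hψ0 hHolder γ t hγ ht
end

section
/- Let q ∈ ℕ, q ≥ 1, and let r : ℝ → ℝ be an even measurable function such that r^q is locally integrable. Set L(t) = ∫₀^t r(u)^q du for t > 0, and assume that L is slowly varying at infinity (i.e. for every c > 0, L(ct)/L(t) → 1 as t → ∞) and that L(t) → ∞ as t → ∞. Then for all 0 ≤ v₁ < v₂, ∫_{t v₁}^{t v₂} ∫_{t v₁}^{t v₂} r(u₁ − u₂)^q du₁ du₂ = 2 ∫₀^{t(v₂ − v₁)} L(u) du for all t > 0, and ∫_{t v₁}^{t v₂} ∫_{t v₁}^{t v₂} r(u₁ − u₂)^q du₁ du₂ / (t L(t)) → 2(v₂ − v₁) as t → ∞.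 -/
/-!
Since `r` is even, `F(x) = ∫₀^x r^q` is odd, so the inner integral over `u₂` equals
`L(u₁ - tv₁) + L(tv₂ - u₁)` and the double integral is `2 ∫₀^{t(v₂-v₁)} L`. The limit is then
Karamata's theorem `∫₀^t L ∼ t L(t)` for the continuous slowly varying function `L`, obtained by
dominated convergence for `∫₀¹ L(tx) / L(t) dx`. The dominating function comes from Potter's bound
`L(s) ≤ e^ε (t/s)^ε L(t)` for large `s ≤ t`, a consequence of the uniform convergence theorem for
slowly varying functions, whose proof is a Steinhaus-type measure argument.
-/

open MeasureTheory Filter Set Topology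

def IsSlowlyVarying (L : ℝ → ℝ) : Prop :=
  ∀ c > 0, Tendsto (fun t => L (c * t) / L t) atTop (𝓝 1)

section UniformConvergence

variable {h : ℝ → ℝ} {a ε X : ℝ}

def smallShifts (h : ℝ → ℝ) (ε X : ℝ) : Set ℝ :=
  {v ∈ Icc 0 2 | ∀ x ≥ X, |h (x + v) - h x| ≤ ε}

lemma isClosed_smallShifts (hcont : ContinuousOn h (Ici a)) (hX : a ≤ X) :
    IsClosed (smallShifts h ε X) := by
  have : smallShifts h ε X =
      ⋂ x ∈ Ici X, Icc 0 2 ∩ (fun v => |h (x + v) - h x|) ⁻¹' Iic ε := by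
    ext v
    simp only [smallShifts, mem_ofPred_eq, mem_iInter, mem_inter_iff, mem_preimage, mem_Iic,
      mem_Ici, ge_iff_le]
    exact ⟨fun hv x _ => ⟨hv.1, hv.2 x ‹_›⟩, fun hv => ⟨(hv X le_rfl).1, fun x hx => (hv x hx).2⟩⟩
  rw [this]
  refine isClosed_biInter fun x hx => ContinuousOn.preimage_isClosed_of_isClosed ?_ isClosed_Icc
    isClosed_Iic
  refine ((hcont.comp (continuousOn_const.add continuousOn_id) fun v hv => ?_).sub
    continuousOn_const).abs
  show a ≤ x + v
  linarith [mem_Ici.1 hx, hv.1]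

lemma tendsto_volume_smallShifts
    (hpt : ∀ u ≥ 0, Tendsto (fun x => h (x + u) - h x) atTop (𝓝 0)) (hε : 0 < ε) :
    Tendsto (fun X => volume (smallShifts h ε X)) atTop (𝓝 (volume (Icc (0:ℝ) 2))) := by
  have hmono : Monotone (smallShifts h ε) := fun X Y hXY v hv =>
    ⟨hv.1, fun x hx => hv.2 x (hXY.trans hx)⟩
  have hunion : ⋃ X, smallShifts h ε X = Icc 0 2 := by
    refine Subset.antisymm (iUnion_subset fun X v hv => hv.1) fun v hv => ?_
    obtain ⟨X, hX⟩ :=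
      eventually_atTop.1 ((hpt v hv.1).eventually (Metric.closedBall_mem_nhds 0 hε))
    exact mem_iUnion.2 ⟨X, hv, fun x hx => by simpa [Real.dist_eq] using hX x hx⟩
  rw [← hunion]
  exact tendsto_measure_iUnion_atTop hmono

theorem eventually_forall_Icc_abs_add_sub_le (hcont : ContinuousOn h (Ici a))
    (hpt : ∀ u ≥ 0, Tendsto (fun x => h (x + u) - h x) atTop (𝓝 0)) (hε : 0 < ε) :
    ∀ᶠ x in atTop, ∀ u ∈ Icc (0:ℝ) 1, |h (x + u) - h x| ≤ ε := by
  have hlt : ENNReal.ofReal (3 / 2) < volume (Icc (0:ℝ) 2) := by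
    rw [Real.volume_Icc, ENNReal.ofReal_lt_ofReal_iff (by norm_num)]; norm_num
  obtain ⟨X, hbig, haX⟩ := (((tendsto_volume_smallShifts hpt (half_pos hε)).eventually_const_lt
    hlt).and (eventually_ge_atTop a)).exists
  filter_upwards [eventually_ge_atTop X] with x hx u hu
  set S := smallShifts h (ε / 2) X
  have hS3 : S ⊆ Icc 0 3 := fun v hv => ⟨hv.1.1, by linarith [hv.1.2]⟩
  have hS3' : (· + -u) ⁻¹' S ⊆ Icc 0 3 := fun v hv => by
    constructor <;> linarith [hv.1.1, hv.1.2, hu.1, hu.2]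
  -- `S` and its translate by `u` lie in `[0, 3]` and each has measure `> 3/2`, so they meet at
  -- some `w`: then `x + w` is a small shift both of `x` and of `x + u`
  obtain ⟨w, hw, hwu⟩ := nonempty_inter_of_measure_lt_add volume
    ((isClosed_smallShifts hcont haX).measurableSet.preimage (measurable_add_const _)) hS3 hS3' (by
      rw [measure_preimage_add_right, Real.volume_Icc]
      calc ENNReal.ofReal (3 - 0) = ENNReal.ofReal (3 / 2) + ENNReal.ofReal (3 / 2) := by
            rw [← ENNReal.ofReal_add] <;> norm_num
        _ < volume S + volume S := ENNReal.add_lt_add hbig hbig)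
  have h1 : |h (x + w) - h x| ≤ ε / 2 := hw.2 x hx
  have h2 : |h (x + u + (w + -u)) - h (x + u)| ≤ ε / 2 := hwu.2 (x + u) (by linarith [hu.1])
  rw [show x + u + (w + -u) = x + w by ring] at h2
  calc |h (x + u) - h x| ≤ |h (x + w) - h (x + u)| + |h (x + w) - h x| := by
        rw [abs_sub_comm (h (x + w))]; exact abs_sub_le _ _ _
    _ ≤ ε := by linarith

theorem abs_sub_le_of_forall_Icc_abs_add_sub_le
    (hstep : ∀ x ≥ X, ∀ u ∈ Icc (0:ℝ) 1, |h (x + u) - h x| ≤ ε) {x y : ℝ} (hx : X ≤ x)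
    (hxy : x ≤ y) : |h y - h x| ≤ ε * (y - x + 1) := by
  have hchain : ∀ n : ℕ, ∀ y ∈ Icc x (x + n), |h y - h x| ≤ ε * n := by
    intro n
    induction n with
    | zero => intro y hy; simp [le_antisymm (by simpa using hy.2) hy.1]
    | succ n ih =>
      intro y hy
      push_cast at hy
      set z := max x (y - 1)
      have hz : z ∈ Icc x (x + n) := ⟨le_max_left _ _, max_le (by linarith) (by linarith [hy.2])⟩
      have hzy : |h (z + (y - z)) - h z| ≤ ε :=
        hstep z (hx.trans hz.1) (y - z) ⟨sub_nonneg.2 (max_le hy.1 (by linarith)), by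
          linarith [le_max_right x (y - 1)]⟩
      rw [add_sub_cancel] at hzy
      calc |h y - h x| ≤ |h y - h z| + |h z - h x| := abs_sub_le _ _ _
        _ ≤ ε * ↑(n + 1) := by push_cast; linarith [ih z hz]
  have hn : y ≤ x + ⌈y - x⌉₊ := by linarith [Nat.le_ceil (y - x)]
  have hε : 0 ≤ ε := (abs_nonneg _).trans (hstep X le_rfl 0 ⟨le_rfl, zero_le_one⟩)
  calc |h y - h x| ≤ ε * ⌈y - x⌉₊ := hchain _ y ⟨hxy, hn⟩
    _ ≤ ε * (y - x + 1) :=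
      mul_le_mul_of_nonneg_left (Nat.ceil_lt_add_one (sub_nonneg.2 hxy)).le hε

end UniformConvergence

lemma integral_div_mul_self_eq_integral_comp_mul {L : ℝ → ℝ} {t : ℝ} (ht : t ≠ 0) :
    (∫ u in (0:ℝ)..t, L u) / (t * L t) = ∫ x in (0:ℝ)..1, L (t * x) / L t := by
  rw [intervalIntegral.integral_div, intervalIntegral.integral_comp_mul_left _ ht, mul_zero,
    mul_one, smul_eq_mul, div_mul_eq_div_div, inv_mul_eq_div]

namespace IsSlowlyVarying

variable {L : ℝ → ℝ}

open Real in
theorem eventually_le_exp_mul_rpow_mul (hL : IsSlowlyVarying L) (hcont : Continuous L)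
    (hpos : ∀ᶠ t in atTop, 0 < L t) {ε : ℝ} (hε : 0 < ε) :
    ∀ᶠ s in atTop, ∀ t ≥ s, L s ≤ exp ε * (t / s) ^ ε * L t := by
  obtain ⟨T, hT⟩ := eventually_atTop.1 (hpos.and (eventually_gt_atTop 0))
  set h : ℝ → ℝ := fun x => log (L (exp x))
  have hTexp : ∀ x ≥ log T, 0 < L (exp x) ∧ 0 < exp x := fun x hx =>
    hT _ (by simpa [exp_log (hT T le_rfl).2] using exp_le_exp.2 hx)
  have hcont : ContinuousOn h (Ici (log T)) :=
    ((hcont.comp continuous_exp).continuousOn).log fun x hx => (hTexp x hx).1.ne'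
  have hpt : ∀ u ≥ 0, Tendsto (fun x => h (x + u) - h x) atTop (𝓝 0) := by
    intro u _
    have hlim : Tendsto (fun x => log (L (exp u * exp x) / L (exp x))) atTop (𝓝 (log 1)) :=
      ((continuousAt_log one_ne_zero).tendsto.comp ((hL _ (exp_pos u)).comp tendsto_exp_atTop))
    rw [log_one] at hlim
    refine hlim.congr' ?_
    filter_upwards [eventually_ge_atTop (log T)] with x hx
    rw [log_div (by rw [← exp_add]; exact (hTexp _ (by linarith)).1.ne') (hTexp x hx).1.ne',
      ← exp_add, add_comm]
  obtain ⟨X, hX⟩ := eventually_atTop.1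
    ((eventually_forall_Icc_abs_add_sub_le hcont hpt hε).and (eventually_ge_atTop (log T)))
  filter_upwards [eventually_ge_atTop (exp X)] with s hs t hst
  have hsX : X ≤ log s := by rwa [le_log_iff_exp_le (by linarith [exp_pos X])]
  have hsT : T ≤ s := by
    rw [← log_le_log_iff (hT T le_rfl).2 (by linarith [exp_pos X])]
    exact (hX X le_rfl).2.trans hsX
  have hs := hT s hsT
  have ht := hT t (hsT.trans hst)
  have hlog := abs_sub_le_of_forall_Icc_abs_add_sub_le (fun x hx => (hX x hx).1) hsX
    (log_le_log hs.2 hst)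
  simp only [h, exp_log hs.2, exp_log ht.2] at hlog
  calc L s = exp (log (L s)) := (exp_log hs.1).symm
    _ ≤ exp (ε + log (t / s) * ε + log (L t)) := by
      rw [exp_le_exp, log_div ht.2.ne' hs.2.ne']; linarith [(abs_le.1 hlog).1]
    _ = exp ε * (t / s) ^ ε * L t := by
      rw [exp_add, exp_add, exp_log ht.1, rpow_def_of_pos (div_pos ht.2 hs.2)]

theorem tendsto_integral_div_mul_self (hL : IsSlowlyVarying L) (hcont : Continuous L) {c : ℝ}
    (hc0 : 0 < c) (hLc : ∀ᶠ t in atTop, c ≤ L t) :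
    Tendsto (fun t => (∫ u in (0:ℝ)..t, L u) / (t * L t)) atTop (𝓝 1) := by
  obtain ⟨T, hT⟩ := eventually_atTop.1 (((hL.eventually_le_exp_mul_rpow_mul hcont
    (hLc.mono fun t ht => hc0.trans_le ht) one_half_pos).and hLc).and (eventually_ge_atTop 0))
  obtain ⟨M, hM⟩ := isCompact_Icc.exists_bound_of_continuousOn (hcont.continuousOn (s := Icc 0 T))
  have hM0 : 0 ≤ M := (norm_nonneg _).trans (hM 0 ⟨le_rfl, (hT T le_rfl).2⟩)
  -- `L (t * x) / L t` is bounded by `M / c` where `t * x < T`, and by Potter's bound elsewhere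
  set bound : ℝ → ℝ := fun x => M / c + Real.exp (1 / 2) * x ^ (-(1 / 2) : ℝ)
  have hbound : ∀ᶠ t in atTop, ∀ x ∈ Ioc (0:ℝ) 1, ‖L (t * x) / L t‖ ≤ bound x := by
    filter_upwards [eventually_ge_atTop T, eventually_gt_atTop 0] with t htT ht0 x hx
    have hLt : c ≤ L t := (hT t htT).1.2
    have hpow : 0 ≤ Real.exp (1 / 2) * x ^ (-(1 / 2) : ℝ) :=
      mul_nonneg (Real.exp_pos _).le (Real.rpow_nonneg hx.1.le _)
    rw [norm_div, Real.norm_of_nonneg (hc0.le.trans hLt)]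
    rcases le_or_gt T (t * x) with hTtx | htxT
    · have hpotter := (hT _ hTtx).1.1 t (by nlinarith [hx.2])
      rw [show t / (t * x) = x⁻¹ by field_simp, Real.inv_rpow hx.1.le,
        ← Real.rpow_neg hx.1.le] at hpotter
      rw [Real.norm_of_nonneg (hc0.le.trans (hT _ hTtx).1.2), div_le_iff₀ (hc0.trans_le hLt)]
      nlinarith [div_nonneg hM0 hc0.le, hc0.trans_le hLt]
    · calc ‖L (t * x)‖ / L t ≤ M / c :=
            div_le_div₀ hM0 (hM _ ⟨(mul_pos ht0 hx.1).le, htxT.le⟩) hc0 hLt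
        _ ≤ bound x := le_add_of_nonneg_right hpow
  have hlim := intervalIntegral.tendsto_integral_filter_of_dominated_convergence (a := 0) (b := 1)
    (μ := volume) (F := fun t x => L (t * x) / L t) (f := fun _ => (1:ℝ)) bound
    (Eventually.of_forall fun t =>
      ((hcont.comp (continuous_const.mul continuous_id)).div_const _).aestronglyMeasurable)
    (hbound.mono fun t ht => ae_of_all _ fun x hx => ht x (by simpa using hx))
    (intervalIntegrable_const.add
      ((intervalIntegral.intervalIntegrable_rpow' (by norm_num)).const_mul _))
    (ae_of_all _ fun x hx =>
      (hL x (show x ∈ Ioc 0 1 by simpa using hx).1).congr fun t => by rw [mul_comm])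
  rw [intervalIntegral.integral_const, sub_zero, one_smul] at hlim
  refine hlim.congr' ?_
  filter_upwards [eventually_gt_atTop 0] with t ht
  exact (integral_div_mul_self_eq_integral_comp_mul ht.ne').symm

theorem tendsto_integral_mul_div (hL : IsSlowlyVarying L) (hcont : Continuous L) {c : ℝ}
    (hc0 : 0 < c) (hLc : ∀ᶠ t in atTop, c ≤ L t) {k : ℝ} (hk : 0 < k) :
    Tendsto (fun t => (∫ u in (0:ℝ)..k * t, L u) / (t * L t)) atTop (𝓝 k) := by
  have hkt := tendsto_id.const_mul_atTop hk
  have hlim := (((hL.tendsto_integral_div_mul_self hcont hc0 hLc).comp hkt).mul (hL k hk)).const_mul k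
  rw [mul_one, mul_one] at hlim
  refine hlim.congr' ?_
  filter_upwards [eventually_gt_atTop 0, hLc, hkt.eventually hLc] with t ht hLt hLkt
  have hLt0 : L t ≠ 0 := (hc0.trans_le hLt).ne'
  have hLkt0 : L (k * t) ≠ 0 := (hc0.trans_le hLkt).ne'
  simp only [Function.comp, id]
  field_simp

end IsSlowlyVarying

namespace Function.Even

variable {E : Type*} [NormedAddCommGroup E] [NormedSpace ℝ E] {f : ℝ → E}

theorem intervalIntegral_zero_neg (hf : f.Even) (x : ℝ) :
    ∫ u in (0:ℝ)..-x, f u = -∫ u in (0:ℝ)..x, f u := by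
  have h := intervalIntegral.integral_comp_neg (a := 0) (b := x) f
  simp only [hf _, neg_zero] at h
  rw [h, intervalIntegral.integral_symm]

theorem intervalIntegral_comp_sub (hf : f.Even) (hloc : LocallyIntegrable f volume) (a b x : ℝ) :
    ∫ y in a..b, f (x - y) = (∫ u in (0:ℝ)..x - a, f u) + ∫ u in (0:ℝ)..b - x, f u := by
  have hint : ∀ c d : ℝ, IntervalIntegrable f volume c d := fun c d =>
    (hloc.integrableOn_isCompact isCompact_uIcc).intervalIntegrable
  rw [intervalIntegral.integral_comp_sub_left,
    ← intervalIntegral.integral_interval_sub_left (hint 0 _) (hint 0 _),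
    show x - b = -(b - x) by ring, hf.intervalIntegral_zero_neg, sub_neg_eq_add]

theorem intervalIntegral_intervalIntegral_sub (hf : f.Even) (hloc : LocallyIntegrable f volume)
    (a b : ℝ) :
    ∫ x in a..b, ∫ y in a..b, f (x - y) = (2:ℝ) • ∫ u in (0:ℝ)..b - a, ∫ v in (0:ℝ)..u, f v := by
  have hF : Continuous fun u => ∫ v in (0:ℝ)..u, f v := intervalIntegral.continuous_primitive
    (fun c d => (hloc.integrableOn_isCompact isCompact_uIcc).intervalIntegrable) 0
  simp only [hf.intervalIntegral_comp_sub hloc]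
  have hFa : Continuous fun x => ∫ u in (0:ℝ)..x - a, f u := hF.comp (continuous_sub_right a)
  have hFb : Continuous fun x => ∫ u in (0:ℝ)..b - x, f u := hF.comp (continuous_sub_left b)
  rw [intervalIntegral.integral_add (hFa.intervalIntegrable _ _) (hFb.intervalIntegrable _ _),
    intervalIntegral.integral_comp_sub_right (fun u => ∫ v in (0:ℝ)..u, f v),
    intervalIntegral.integral_comp_sub_left (fun u => ∫ v in (0:ℝ)..u, f v), sub_self, sub_self,
    two_smul]

end Function.Even

theorem stmt6_general (q : ℕ) (r : ℝ → ℝ)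
    (heven : ∀ u, r (-u) = r u)
    (hloc : LocallyIntegrable (fun u => r u ^ q) volume)
    (L : ℝ → ℝ) (hL : ∀ t, L t = ∫ u in (0:ℝ)..t, r u ^ q)
    (hslow : ∀ c > 0, Tendsto (fun t => L (c * t) / L t) atTop (nhds 1))
    (hinf : Tendsto L atTop atTop)
    (v₁ v₂ : ℝ) (hv₁₂ : v₁ < v₂) :
    (∀ t > 0,
      (∫ u₁ in t * v₁..t * v₂, ∫ u₂ in t * v₁..t * v₂, r (u₁ - u₂) ^ q) =
        2 * ∫ u in (0:ℝ)..(t * (v₂ - v₁)), L u) ∧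
    Tendsto
      (fun t =>
        (∫ u₁ in t * v₁..t * v₂, ∫ u₂ in t * v₁..t * v₂, r (u₁ - u₂) ^ q) / (t * L t))
      atTop (nhds (2 * (v₂ - v₁))) := by
  have hLeq : L = fun t => ∫ u in (0:ℝ)..t, r u ^ q := funext hL
  have hLcont : Continuous L := hLeq ▸ intervalIntegral.continuous_primitive
    (fun a b => (hloc.integrableOn_isCompact isCompact_uIcc).intervalIntegrable) 0
  have hfeven : Function.Even fun u => r u ^ q := fun u => congrArg (· ^ q) (heven u)
  have hdouble : ∀ t, (∫ u₁ in t * v₁..t * v₂, ∫ u₂ in t * v₁..t * v₂, r (u₁ - u₂) ^ q) =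
      2 * ∫ u in (0:ℝ)..(v₂ - v₁) * t, L u := fun t => by
    rw [hfeven.intervalIntegral_intervalIntegral_sub hloc, hLeq, smul_eq_mul, ← mul_sub,
      mul_comm t]
  refine ⟨fun t _ => by rw [hdouble, mul_comm t], ?_⟩
  refine ((IsSlowlyVarying.tendsto_integral_mul_div hslow hLcont one_pos
    (hinf.eventually_ge_atTop 1) (sub_pos.2 hv₁₂)).const_mul 2).congr fun t => ?_
  rw [hdouble, mul_div_assoc]

/-- Let `r` be even and measurable with `r^q` locally integrable, and let
`L t = ∫₀^t r(u)^q du` be slowly varying at infinity with `L t → ∞`. Then for `0 ≤ v₁ < v₂`,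
`∫_{tv₁}^{tv₂} ∫_{tv₁}^{tv₂} r(u₁−u₂)^q du₁ du₂ = 2 ∫₀^{t(v₂−v₁)} L u du` for all `t > 0`, and
the double integral, divided by `t L t`, tends to `2(v₂−v₁)` as `t → ∞`. -/
theorem stmt6 (q : ℕ) (hq : 1 ≤ q) (r : ℝ → ℝ) (hmeas : Measurable r)
    (heven : ∀ u, r (-u) = r u)
    (hloc : LocallyIntegrable (fun u => r u ^ q) volume)
    (L : ℝ → ℝ) (hL : ∀ t, L t = ∫ u in (0:ℝ)..t, r u ^ q)
    (hslow : ∀ c > 0, Tendsto (fun t => L (c * t) / L t) atTop (nhds 1))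
    (hinf : Tendsto L atTop atTop)
    (v₁ v₂ : ℝ) (hv₁ : 0 ≤ v₁) (hv₁₂ : v₁ < v₂) :
    (∀ t > 0,
      (∫ u₁ in t * v₁..t * v₂, ∫ u₂ in t * v₁..t * v₂, r (u₁ - u₂) ^ q) =
        2 * ∫ u in (0:ℝ)..(t * (v₂ - v₁)), L u) ∧
    Tendsto
      (fun t =>
        (∫ u₁ in t * v₁..t * v₂, ∫ u₂ in t * v₁..t * v₂, r (u₁ - u₂) ^ q) / (t * L t))
      atTop (nhds (2 * (v₂ - v₁))) :=
  stmt6_general q r heven hloc L hL hslow hinf v₁ v₂ hv₁₂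
end

section
/- Let q ∈ ℕ, q ≥ 1, and let r : ℝ → ℝ be an even measurable function such that r^q is locally integrable. Set L(t) = ∫₀^t r(u)^q du for t > 0, and assume that L is slowly varying at infinity and L(t) → ∞ as t → ∞. Then for all 0 ≤ v₁ < v₂ ≤ v₃ < v₄, ∫_{t v₃}^{t v₄} ∫_{t v₁}^{t v₂} r(u₁ − u₂)^q du₁ du₂ = o(t L(t)) as t → ∞, i.e. the ratio of the double integral to t L(t) tends to 0. -/
/-!
The double integral is the second difference
`Φ (t (v₄ - v₁)) - Φ (t (v₃ - v₁)) - Φ (t (v₄ - v₂)) + Φ (t (v₃ - v₂))` of `Φ x = ∫₀ˣ L`, and by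
Karamata's theorem `Φ (c t) = c t L t + o (t L t)` for every `c ≥ 0`; the linear terms cancel.
Karamata's theorem splits `∫₀^{ct} L` at `δ t`: on `[δ t, c t]` the uniform convergence theorem
gives `L ≈ L t`, while on `[0, δ t]` Potter's bound `L s ≤ e^{1/2} L t (t / s)^{1/2}` makes the
integral `O (√δ · t L t)`. Both bounds are proved for the additive form `log ∘ L ∘ exp`.
-/

open MeasureTheory Filter Asymptotics Set Topology
open scoped ENNReal

section UniformConvergence

variable {h : ℝ → ℝ}

lemma tendsto_restrict_Icc_setOf_le_abs_sub (hm : Measurable h)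
    (hs : ∀ u, Tendsto (fun x => h (x + u) - h x) atTop (𝓝 0)) {ε : ℝ} (hε : 0 < ε) :
    Tendsto (fun x => volume.restrict (Icc (0 : ℝ) 2) {s | ε ≤ |h (x + s) - h x|})
      atTop (𝓝 0) := by
  set μ := volume.restrict (Icc (0 : ℝ) 2)
  have hmeas (x : ℝ) : MeasurableSet {s | ε ≤ |h (x + s) - h x|} :=
    measurableSet_le measurable_const (by fun_prop)
  simp_rw [← lintegral_indicator_one (μ := μ) (hmeas _)]
  rw [← lintegral_zero (μ := μ)]
  refine tendsto_lintegral_filter_of_dominated_convergence 1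
    (Eventually.of_forall fun x => measurable_one.indicator (hmeas x))
    (Eventually.of_forall fun x => ae_of_all _ fun s => indicator_le_self' (by simp) s)
    (by simp [μ]) (ae_of_all _ fun s => tendsto_const_nhds.congr' ?_)
  filter_upwards [(hs s).eventually (Metric.ball_mem_nhds 0 hε)] with x hx
  have : |h (x + s) - h x| < ε := by simpa using hx
  simp [indicator_of_notMem (show s ∉ {s | ε ≤ |h (x + s) - h x|} from not_le.mpr this)]

lemma exists_notMem_of_restrict_Icc_add_lt_one {A B : Set ℝ} {u : ℝ} (hu : u ∈ Icc (0 : ℝ) 1)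
    (hAB : volume.restrict (Icc (0 : ℝ) 2) A + volume.restrict (Icc (0 : ℝ) 2) B < 1) :
    ∃ s ∈ Icc u (u + 1), s ∉ A ∧ s - u ∉ B := by
  by_contra! hcover
  have hsub : Icc u (u + 1) ⊆ (A ∩ Icc 0 2) ∪ (fun s => s - u) ⁻¹' (B ∩ Icc 0 2) := by
    intro s hs
    by_cases hsA : s ∈ A
    · exact Or.inl ⟨hsA, by linarith [hu.1, hs.1], by linarith [hu.2, hs.2]⟩
    · exact Or.inr ⟨hcover s hs hsA, by linarith [hs.1], by linarith [hu.1, hs.2]⟩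
  have hvol := (measure_mono (μ := volume) hsub).trans (measure_union_le _ _)
  simp only [sub_eq_add_neg, measure_preimage_add_right] at hvol
  rw [Real.volume_Icc, add_sub_cancel_left, ENNReal.ofReal_one,
    ← Measure.restrict_apply' measurableSet_Icc,
    ← Measure.restrict_apply' measurableSet_Icc] at hvol
  exact hAB.not_ge hvol

/-- The uniform convergence theorem on `[0, 1]` (Csiszár–Erdős): the exceptional sets at `x` and
`x + u` are small, so some `x + s` lies outside both, and `h (x + u) - h x` splits through it. -/
lemma eventually_forall_Icc_abs_sub_le (hm : Measurable h)
    (hs : ∀ u, Tendsto (fun x => h (x + u) - h x) atTop (𝓝 0)) {ε : ℝ} (hε : 0 < ε) :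
    ∀ᶠ x in atTop, ∀ u ∈ Icc (0 : ℝ) 1, |h (x + u) - h x| ≤ ε := by
  obtain ⟨X, hX⟩ := eventually_atTop.mp <|
    (tendsto_restrict_Icc_setOf_le_abs_sub hm hs (half_pos hε)).eventually_lt_const
      (by norm_num : (0 : ℝ≥0∞) < 2⁻¹)
  filter_upwards [eventually_ge_atTop X] with x hx u hu
  obtain ⟨s, -, hsx, hsu⟩ := exists_notMem_of_restrict_Icc_add_lt_one hu <|
    (ENNReal.add_lt_add (hX x hx) (hX (x + u) (by linarith [hu.1]))).trans_eq
      ENNReal.inv_two_add_inv_two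
  simp only [mem_ofPred_eq, not_le, add_add_sub_cancel] at hsx hsu
  calc |h (x + u) - h x| = |(h (x + s) - h x) - (h (x + s) - h (x + u))| := by ring_nf
    _ ≤ |h (x + s) - h x| + |h (x + s) - h (x + u)| := abs_sub _ _
    _ ≤ ε := by linarith

lemma eventually_forall_abs_sub_le_mul_add_one (hm : Measurable h)
    (hs : ∀ u, Tendsto (fun x => h (x + u) - h x) atTop (𝓝 0)) {ε : ℝ} (hε : 0 < ε) :
    ∀ᶠ y in atTop, ∀ d, 0 ≤ d → |h (y + d) - h y| ≤ ε * (d + 1) := by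
  obtain ⟨X, hX⟩ := eventually_atTop.mp (eventually_forall_Icc_abs_sub_le hm hs hε)
  have chain (n : ℕ) : ∀ y, X ≤ y → ∀ d ∈ Icc (0 : ℝ) (n + 1), |h (y + d) - h y| ≤ ε * (n + 1) := by
    induction n with
    | zero => simpa using hX
    | succ n ih =>
      intro y hy d hd
      push_cast
      rcases le_or_gt d 1 with hd1 | hd1
      · nlinarith [hX y hy d ⟨hd.1, hd1⟩, n.cast_nonneg (α := ℝ)]
      · have h1 := hX y hy 1 ⟨zero_le_one, le_rfl⟩
        have h2 := ih (y + 1) (by linarith) (d - 1)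
          ⟨by linarith, by push_cast at hd; linarith [hd.2]⟩
        rw [add_add_sub_cancel] at h2
        calc |h (y + d) - h y| ≤ |h (y + d) - h (y + 1)| + |h (y + 1) - h y| := abs_sub_le _ _ _
          _ ≤ ε * (n + 1 + 1) := by linarith
  filter_upwards [eventually_ge_atTop X] with y hy d hd
  calc |h (y + d) - h y| ≤ ε * (⌊d⌋₊ + 1) := chain _ y hy d ⟨hd, (Nat.lt_floor_add_one d).le⟩
    _ ≤ ε * (d + 1) := by gcongr; exact Nat.floor_le hd

lemma eventually_forall_abs_le_abs_sub_le (hm : Measurable h)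
    (hs : ∀ u, Tendsto (fun x => h (x + u) - h x) atTop (𝓝 0)) (M : ℝ) {ε : ℝ} (hε : 0 < ε) :
    ∀ᶠ x in atTop, ∀ u, |u| ≤ M → |h (x + u) - h x| ≤ ε := by
  have hM : 0 < |M| + 1 := by positivity
  obtain ⟨X, hX⟩ := eventually_atTop.mp <|
    eventually_forall_abs_sub_le_mul_add_one hm hs (div_pos hε hM)
  have bound {d : ℝ} (hd : d ≤ M) : ε / (|M| + 1) * (d + 1) ≤ ε := by
    rw [div_mul_eq_mul_div, div_le_iff₀ hM]
    gcongr
    linarith [le_abs_self M]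
  filter_upwards [eventually_ge_atTop (X + |M|)] with x hx u hu
  obtain ⟨hu₁, hu₂⟩ := abs_le.mp hu
  rcases le_total 0 u with h0 | h0
  · exact (hX x (by linarith [abs_nonneg M]) u h0).trans (bound hu₂)
  · have := hX (x + u) (by linarith [le_abs_self M, neg_abs_le M]) (-u) (by linarith)
    rw [add_neg_cancel_right, abs_sub_comm] at this
    exact this.trans (bound (by linarith [neg_abs_le M]))

end UniformConvergence

def SlowlyVarying (L : ℝ → ℝ) : Prop :=
  ∀ c > 0, Tendsto (fun t => L (c * t) / L t) atTop (𝓝 1)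

lemma abs_sub_le_mul_of_abs_log_sub_le {x y ε : ℝ} (hx : 0 < x) (hy : 0 < y) (hε : 0 ≤ ε)
    (h : |Real.log x - Real.log y| ≤ Real.log (1 + ε)) : |x - y| ≤ ε * y := by
  obtain ⟨h₁, h₂⟩ := abs_le.mp h
  have hxy : x ≤ y * (1 + ε) := by
    rw [← Real.log_le_log_iff hx (by positivity), Real.log_mul hy.ne' (by positivity)]
    linarith
  have hyx : y ≤ x * (1 + ε) := by
    rw [← Real.log_le_log_iff hy (by positivity), Real.log_mul hx.ne' (by positivity)]
    linarith
  rw [abs_le]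
  constructor <;> nlinarith

lemma integral_le_two_mul_mul_rpow {f : ℝ → ℝ} {T x C : ℝ} (hT : 0 < T) (hTx : T ≤ x)
    (hf : IntervalIntegrable f volume T x) (hC : 0 ≤ C)
    (hfC : ∀ s ∈ Icc T x, f s ≤ C * s ^ (-(1 / 2) : ℝ)) :
    ∫ s in T..x, f s ≤ 2 * C * x ^ (1 / 2 : ℝ) := by
  have hpow : IntervalIntegrable (fun s => C * s ^ (-(1 / 2) : ℝ)) volume T x :=
    (intervalIntegral.intervalIntegrable_rpow (Or.inr fun h0 => by
      rw [uIcc_of_le hTx] at h0; linarith [h0.1])).const_mul C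
  calc ∫ s in T..x, f s ≤ ∫ s in T..x, C * s ^ (-(1 / 2) : ℝ) :=
        intervalIntegral.integral_mono_on hTx hf hpow hfC
    _ = 2 * C * (x ^ (1 / 2 : ℝ) - T ^ (1 / 2 : ℝ)) := by
        rw [intervalIntegral.integral_const_mul, integral_rpow (Or.inl (by norm_num))]
        norm_num
        ring
    _ ≤ 2 * C * x ^ (1 / 2 : ℝ) := by
        gcongr
        linarith [Real.rpow_nonneg hT.le (1 / 2 : ℝ)]

namespace SlowlyVarying

variable {L : ℝ → ℝ}

lemma tendsto_log_comp_exp_add_sub (hL : SlowlyVarying L) (hinf : Tendsto L atTop atTop)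
    (u : ℝ) :
    Tendsto (fun x => Real.log (L (Real.exp (x + u))) - Real.log (L (Real.exp x))) atTop
      (𝓝 0) := by
  have hlog : Tendsto (fun t => Real.log (L (Real.exp u * t) / L t)) atTop (𝓝 0) := by
    have := (Real.continuousAt_log one_ne_zero).tendsto.comp (hL _ (Real.exp_pos u))
    rwa [Real.log_one] at this
  refine (hlog.comp Real.tendsto_exp_atTop).congr' ?_
  have hpos := Real.tendsto_exp_atTop.eventually (hinf.eventually_gt_atTop 0)
  filter_upwards [hpos, (tendsto_atTop_add_const_right atTop u tendsto_id).eventually hpos]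
    with x hx (hxu : 0 < L (Real.exp (x + u)))
  rw [Function.comp_apply, ← Real.exp_add, add_comm u x, Real.log_div hxu.ne' hx.ne']

/-- The uniform convergence theorem for slowly varying functions. -/
lemma eventually_forall_Icc_abs_sub_le (hL : SlowlyVarying L) (hm : Measurable L)
    (hinf : Tendsto L atTop atTop) {a b : ℝ} (ha : 0 < a) {ε : ℝ} (hε : 0 < ε) :
    ∀ᶠ t in atTop, ∀ s ∈ Icc (t * a) (t * b), |L s - L t| ≤ ε * L t := by
  have hUCT := eventually_forall_abs_le_abs_sub_le
    (h := fun x => Real.log (L (Real.exp x))) (by fun_prop)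
    (hL.tendsto_log_comp_exp_add_sub hinf) (|Real.log a| + |Real.log b|)
    (Real.log_pos (by linarith : 1 < 1 + ε))
  obtain ⟨T, hT⟩ := eventually_atTop.mp (hinf.eventually_gt_atTop 0)
  filter_upwards [Real.tendsto_log_atTop.eventually hUCT,
    (tendsto_id.atTop_mul_const ha).eventually_ge_atTop T, hinf.eventually_gt_atTop 0,
    eventually_gt_atTop 0] with t hU (htT : T ≤ t * a) hLt ht s hs
  have hs0 : 0 < s := (mul_pos ht ha).trans_le hs.1
  have hb : 0 < b := pos_of_mul_pos_right (hs0.trans_le hs.2) ht.le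
  have hlogs₁ := Real.log_le_log (mul_pos ht ha) hs.1
  have hlogs₂ := Real.log_le_log hs0 hs.2
  rw [Real.log_mul ht.ne' ha.ne'] at hlogs₁
  rw [Real.log_mul ht.ne' hb.ne'] at hlogs₂
  have hu : |Real.log s - Real.log t| ≤ |Real.log a| + |Real.log b| := by
    rw [abs_le]
    constructor <;> linarith [neg_abs_le (Real.log a), le_abs_self (Real.log b),
      abs_nonneg (Real.log a), abs_nonneg (Real.log b)]
  have hlog := hU _ hu
  rw [add_sub_cancel, Real.exp_log hs0, Real.exp_log ht] at hlog
  exact abs_sub_le_mul_of_abs_log_sub_le (hT s (htT.trans hs.1)) hLt hε.le hlog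

/-- Potter's bound. -/
lemma eventually_forall_le_mul_rpow (hL : SlowlyVarying L) (hm : Measurable L)
    (hinf : Tendsto L atTop atTop) :
    ∀ᶠ s in atTop, ∀ t, s ≤ t → L s ≤ Real.exp (1 / 2) * L t * (t / s) ^ (1 / 2 : ℝ) := by
  obtain ⟨T, hT⟩ := eventually_atTop.mp (hinf.eventually_gt_atTop 0)
  filter_upwards [Real.tendsto_log_atTop.eventually <| eventually_forall_abs_sub_le_mul_add_one
      (h := fun x => Real.log (L (Real.exp x))) (by fun_prop)
      (hL.tendsto_log_comp_exp_add_sub hinf) one_half_pos,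
    eventually_ge_atTop T, eventually_gt_atTop 0] with s hU hsT hs t hst
  have ht : 0 < t := hs.trans_le hst
  have hlog := hU (Real.log t - Real.log s) (sub_nonneg.mpr (Real.log_le_log hs hst))
  rw [add_sub_cancel, Real.exp_log hs, Real.exp_log ht] at hlog
  calc L s = Real.exp (Real.log (L s)) := (Real.exp_log (hT s hsT)).symm
    _ ≤ Real.exp (Real.log (L t) + (1 / 2 + (Real.log t - Real.log s) * (1 / 2))) :=
        Real.exp_le_exp.mpr (by linarith [neg_abs_le (Real.log (L t) - Real.log (L s))])
    _ = Real.exp (1 / 2) * L t * (t / s) ^ (1 / 2 : ℝ) := by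
        rw [Real.rpow_def_of_pos (div_pos ht hs), Real.log_div ht.ne' hs.ne', Real.exp_add,
          Real.exp_add, Real.exp_log (hT t (hsT.trans hst))]
        ring

lemma exists_abs_integral_le (hL : SlowlyVarying L) (hc : Continuous L)
    (hinf : Tendsto L atTop atTop) :
    ∃ K, ∀ δ ∈ Ioc (0 : ℝ) 1, ∀ᶠ t in atTop,
      |∫ s in (0 : ℝ)..t * δ, L s| ≤ K * δ ^ (1 / 2 : ℝ) * (t * L t) := by
  obtain ⟨T, hT⟩ := eventually_atTop.mp <| (hL.eventually_forall_le_mul_rpow hc.measurable hinf).and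
    ((hinf.eventually_ge_atTop 0).and (eventually_gt_atTop 0))
  refine ⟨2 * Real.exp (1 / 2) + 1, fun δ hδ => ?_⟩
  have hδ' : 0 < δ ^ (1 / 2 : ℝ) := Real.rpow_pos_of_pos hδ.1 _
  filter_upwards [(tendsto_id.atTop_mul_const hδ.1).eventually_ge_atTop T,
    ((tendsto_id.atTop_mul_atTop₀ hinf).const_mul_atTop hδ').eventually_ge_atTop
      |∫ s in (0 : ℝ)..T, L s|,
    hinf.eventually_gt_atTop 0, eventually_gt_atTop 0]
    with t (htδ : T ≤ t * δ) (hhead : _ ≤ δ ^ (1 / 2 : ℝ) * (t * L t)) hLt ht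
  have hpot (s : ℝ) (hs : s ∈ Icc T (t * δ)) :
      L s ≤ (Real.exp (1 / 2) * L t * t ^ (1 / 2 : ℝ)) * s ^ (-(1 / 2) : ℝ) := by
    have hs0 : 0 < s := (hT T le_rfl).2.2.trans_le hs.1
    calc L s ≤ Real.exp (1 / 2) * L t * (t / s) ^ (1 / 2 : ℝ) :=
          (hT s hs.1).1 t (hs.2.trans (mul_le_of_le_one_right ht.le hδ.2))
      _ = _ := by rw [Real.div_rpow ht.le hs0.le, Real.rpow_neg hs0.le]; ring
  have htail := integral_le_two_mul_mul_rpow (hT T le_rfl).2.2 htδ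
    (hc.intervalIntegrable _ _) (by positivity) hpot
  have htail₀ : 0 ≤ ∫ s in T..t * δ, L s :=
    intervalIntegral.integral_nonneg htδ fun s hs => (hT s hs.1).2.1
  have hsqrt : t ^ (1 / 2 : ℝ) * t ^ (1 / 2 : ℝ) = t := by
    rw [← Real.rpow_add ht]; norm_num
  rw [← intervalIntegral.integral_add_adjacent_intervals (hc.intervalIntegrable 0 T)
    (hc.intervalIntegrable T (t * δ))]
  calc _ ≤ |∫ s in (0 : ℝ)..T, L s| + ∫ s in T..t * δ, L s :=
        (abs_add_le _ _).trans_eq (by rw [abs_of_nonneg htail₀])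
    _ ≤ δ ^ (1 / 2 : ℝ) * (t * L t) +
        2 * (Real.exp (1 / 2) * L t * t ^ (1 / 2 : ℝ)) * (t * δ) ^ (1 / 2 : ℝ) :=
        add_le_add hhead htail
    _ = _ := by
        rw [Real.mul_rpow ht.le hδ.1.le]
        linear_combination (2 * Real.exp (1 / 2) * L t * δ ^ (1 / 2 : ℝ)) * hsqrt

lemma eventually_abs_integral_sub_le (hL : SlowlyVarying L) (hc : Continuous L)
    (hinf : Tendsto L atTop atTop) {a b : ℝ} (ha : 0 < a) (hab : a ≤ b) {ε : ℝ} (hε : 0 < ε) :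
    ∀ᶠ t in atTop,
      |(∫ s in t * a..t * b, L s) - (b - a) * (t * L t)| ≤ ε * (b - a) * (t * L t) := by
  filter_upwards [hL.eventually_forall_Icc_abs_sub_le hc.measurable hinf ha hε,
    eventually_ge_atTop 0] with t hU ht
  have htab : t * a ≤ t * b := mul_le_mul_of_nonneg_left hab ht
  have hbound : ∀ s ∈ uIoc (t * a) (t * b), ‖L s - L t‖ ≤ ε * L t := fun s hs => by
    rw [uIoc_of_le htab] at hs
    exact hU s (Ioc_subset_Icc_self hs)
  calc |(∫ s in t * a..t * b, L s) - (b - a) * (t * L t)|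
      = ‖∫ s in t * a..t * b, (L s - L t)‖ := by
        rw [intervalIntegral.integral_sub (hc.intervalIntegrable _ _) intervalIntegrable_const,
          intervalIntegral.integral_const, smul_eq_mul, Real.norm_eq_abs]
        ring_nf
    _ ≤ ε * L t * |t * b - t * a| := intervalIntegral.norm_integral_le_of_norm_le_const hbound
    _ = ε * (b - a) * (t * L t) := by
        rw [abs_of_nonneg (sub_nonneg.mpr htab)]; ring

/-- Karamata's theorem. -/
theorem isLittleO_integral_sub_mul (hL : SlowlyVarying L) (hc : Continuous L)
    (hinf : Tendsto L atTop atTop) {c : ℝ} (hc₀ : 0 ≤ c) :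
    (fun t => (∫ s in (0 : ℝ)..t * c, L s) - c * (t * L t)) =o[atTop] fun t => t * L t := by
  rcases hc₀.eq_or_lt with rfl | hc₀
  · simp
  obtain ⟨K, hK⟩ := hL.exists_abs_integral_le hc hinf
  refine isLittleO_iff.mpr fun ε hε => ?_
  have hsmall : Tendsto (fun δ : ℝ => K * δ ^ (1 / 2 : ℝ) + δ) (𝓝[>] 0) (𝓝 0) := by
    have h0 : Tendsto (fun δ : ℝ => K * δ ^ (1 / 2 : ℝ) + δ) (𝓝 0)
        (𝓝 (K * 0 ^ (1 / 2 : ℝ) + 0)) :=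
      (((Real.continuous_rpow_const (by norm_num)).const_mul K).add continuous_id).tendsto 0
    rw [Real.zero_rpow one_half_pos.ne', mul_zero, add_zero] at h0
    exact h0.mono_left nhdsWithin_le_nhds
  obtain ⟨δ, hδε, hδ₀, hδ₁⟩ := ((hsmall.eventually (gt_mem_nhds (half_pos hε))).and
    (Ioo_mem_nhdsGT (lt_min hc₀ one_pos))).exists
  filter_upwards [hK δ ⟨hδ₀, hδ₁.le.trans (min_le_right _ _)⟩,
    hL.eventually_abs_integral_sub_le hc hinf hδ₀ (hδ₁.le.trans (min_le_left _ _))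
      (div_pos hε (mul_pos two_pos hc₀)),
    hinf.eventually_ge_atTop 0, eventually_ge_atTop 0] with t hhead hmid hLt ht
  have htL : 0 ≤ t * L t := mul_nonneg ht hLt
  have hmid' : ε / (2 * c) * (c - δ) ≤ ε / 2 := by
    rw [div_mul_eq_mul_div, div_le_div_iff₀ (by positivity) two_pos]
    nlinarith
  rw [← intervalIntegral.integral_add_adjacent_intervals (hc.intervalIntegrable 0 (t * δ))
    (hc.intervalIntegrable (t * δ) (t * c)), Real.norm_eq_abs, Real.norm_eq_abs, abs_of_nonneg htL]
  set A := ∫ s in (0 : ℝ)..t * δ, L s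
  set B := ∫ s in t * δ..t * c, L s
  calc |A + B - c * (t * L t)| = |A + (B - (c - δ) * (t * L t)) - δ * (t * L t)| := by
        congr 1; ring
    _ ≤ |A| + |B - (c - δ) * (t * L t)| + |δ * (t * L t)| :=
        (abs_sub _ _).trans (add_le_add_left (abs_add_le _ _) _)
    _ ≤ K * δ ^ (1 / 2 : ℝ) * (t * L t) + ε / (2 * c) * (c - δ) * (t * L t) + δ * (t * L t) := by
        rw [abs_of_nonneg (mul_nonneg hδ₀.le htL)]
        linarith
    _ ≤ ε * (t * L t) := by
        nlinarith [mul_le_mul_of_nonneg_right hδε.le htL, mul_le_mul_of_nonneg_right hmid' htL]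

end SlowlyVarying

lemma MeasureTheory.LocallyIntegrable.intervalIntegrable {E : Type*} [NormedAddCommGroup E]
    {f : ℝ → E} {μ : Measure ℝ} [IsLocallyFiniteMeasure μ] (hf : LocallyIntegrable f μ)
    (a b : ℝ) : IntervalIntegrable f μ a b :=
  intervalIntegrable_iff.mpr ((hf.integrableOn_isCompact isCompact_uIcc).mono_set uIoc_subset_uIcc)

lemma integral_integral_comp_sub_eq {g F : ℝ → ℝ} (hg : LocallyIntegrable g volume)
    (hF : ∀ x, F x = ∫ u in (0 : ℝ)..x, g u) (a₁ a₂ a₃ a₄ : ℝ) :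
    ∫ u₁ in a₃..a₄, ∫ u₂ in a₁..a₂, g (u₁ - u₂) =
      ((∫ s in (0 : ℝ)..a₄ - a₁, F s) - ∫ s in (0 : ℝ)..a₃ - a₁, F s) -
        ((∫ s in (0 : ℝ)..a₄ - a₂, F s) - ∫ s in (0 : ℝ)..a₃ - a₂, F s) := by
  have hgi (a b : ℝ) : IntervalIntegrable g volume a b := hg.intervalIntegrable a b
  have hFc : Continuous F := funext hF ▸ intervalIntegral.continuous_primitive hgi 0
  have hFi (a : ℝ) : IntervalIntegrable (fun u => F (u - a)) volume a₃ a₄ :=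
    (hFc.comp (continuous_sub_right a)).intervalIntegrable _ _
  have hinner (u₁ : ℝ) : ∫ u₂ in a₁..a₂, g (u₁ - u₂) = F (u₁ - a₁) - F (u₁ - a₂) := by
    rw [intervalIntegral.integral_comp_sub_left (fun s => g s) u₁, hF, hF,
      intervalIntegral.integral_interval_sub_left (hgi _ _) (hgi _ _)]
  simp_rw [hinner]
  rw [intervalIntegral.integral_sub (hFi a₁) (hFi a₂),
    intervalIntegral.integral_comp_sub_right F, intervalIntegral.integral_comp_sub_right F,
    ← intervalIntegral.integral_interval_sub_left (hFc.intervalIntegrable 0 _)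
      (hFc.intervalIntegrable 0 _),
    ← intervalIntegral.integral_interval_sub_left (hFc.intervalIntegrable 0 (a₄ - a₂))
      (hFc.intervalIntegrable 0 _)]

theorem stmt7_general (q : ℕ) (r : ℝ → ℝ)
    (hloc : LocallyIntegrable (fun u => r u ^ q) volume)
    (L : ℝ → ℝ) (hL : ∀ t, L t = ∫ u in (0:ℝ)..t, r u ^ q)
    (hslow : ∀ c > 0, Tendsto (fun t => L (c * t) / L t) atTop (nhds 1))
    (hinf : Tendsto L atTop atTop)
    (v₁ v₂ v₃ v₄ : ℝ) (hv₁₂ : v₁ < v₂) (hv₂₃ : v₂ ≤ v₃) (hv₃₄ : v₃ < v₄) :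
    (fun t => ∫ u₁ in t * v₃..t * v₄, ∫ u₂ in t * v₁..t * v₂, r (u₁ - u₂) ^ q)
      =o[atTop] (fun t => t * L t) := by
  have hLc : Continuous L :=
    funext hL ▸ intervalIntegral.continuous_primitive hloc.intervalIntegrable 0
  have karamata {c : ℝ} (hc : 0 ≤ c) :=
    SlowlyVarying.isLittleO_integral_sub_mul hslow hLc hinf hc
  have h₁ := (karamata (c := v₄ - v₁) (by linarith)).sub (karamata (c := v₃ - v₁) (by linarith))
  have h₂ := (karamata (c := v₄ - v₂) (by linarith)).sub (karamata (c := v₃ - v₂) (by linarith))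
  refine (h₁.sub h₂).congr_left fun t => ?_
  rw [integral_integral_comp_sub_eq hloc hL, ← mul_sub, ← mul_sub, ← mul_sub, ← mul_sub]
  ring

/-- Let `r` be even and measurable with `r^q` locally integrable, and let
`L t = ∫₀^t r(u)^q du` be slowly varying at infinity with `L t → ∞`. Then for
`0 ≤ v₁ < v₂ ≤ v₃ < v₄`,
`∫_{tv₃}^{tv₄} ∫_{tv₁}^{tv₂} r(u₁−u₂)^q du₁ du₂ = o(t L t)` as `t → ∞`. -/
theorem stmt7 (q : ℕ) (hq : 1 ≤ q) (r : ℝ → ℝ) (hmeas : Measurable r)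
    (heven : ∀ u, r (-u) = r u)
    (hloc : LocallyIntegrable (fun u => r u ^ q) volume)
    (L : ℝ → ℝ) (hL : ∀ t, L t = ∫ u in (0:ℝ)..t, r u ^ q)
    (hslow : ∀ c > 0, Tendsto (fun t => L (c * t) / L t) atTop (nhds 1))
    (hinf : Tendsto L atTop atTop)
    (v₁ v₂ v₃ v₄ : ℝ) (hv₁ : 0 ≤ v₁) (hv₁₂ : v₁ < v₂) (hv₂₃ : v₂ ≤ v₃) (hv₃₄ : v₃ < v₄) :
    (fun t => ∫ u₁ in t * v₃..t * v₄, ∫ u₂ in t * v₁..t * v₂, r (u₁ - u₂) ^ q)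
      =o[atTop] (fun t => t * L t) :=
  stmt7_general q r hloc L hL hslow hinf v₁ v₂ v₃ v₄ hv₁₂ hv₂₃ hv₃₄
end

section
/- Let q ∈ ℕ, q ≥ 1, and let r : ℝ → ℝ be an even continuous function with |r(u)| ≤ 1 for all u, r(u) → 0 as u → ∞. Set L(t) = ∫₀^t r(u)^q du and L_{|·|}(t) = ∫₀^t |r(u)|^q du, and assume that L and L_{|·|} are slowly varying at infinity, that L(t) → ∞ as t → ∞, and that limsup_{t→∞} L_{|·|}(t)/L(t) < ∞. Then for every v > 0, M_t(v) := sup_{m ≥ q+1} ∫₀^{v t} ∫₀^{v t} |r(u₁ − u₂)|^m du₁ du₂ satisfies M_t(v) = o(t L(t)) as t → ∞. -/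
/-!
Since `|r| ≤ 1`, every `|r|^m` with `m ≥ q + 1` is dominated by `ρ = |r|^(q+1)`, and as `ρ` is even
and nonnegative, `∫₀^T ρ(u₁ - u₂) du₂ ≤ ∫_{-T}^T ρ = 2 ∫₀^T ρ` for `u₁ ∈ [0, T]`; hence
`M_t(v) ≤ 2vt ∫₀^{vt} ρ`. Writing `ρ = |r| · |r|^q` with `|r| → 0` and `∫₀^T |r|^q → ∞`, a Cesàro
argument gives `∫₀^T ρ = o(L_{|·|}(T))`. Finally `L_{|·|}(vt) = O(L_{|·|}(t))` by slow variation
and `L_{|·|} = O(L)` by the limsup bound.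
-/

open MeasureTheory Filter Asymptotics

theorem intervalIntegral_neg_self_of_even {f : ℝ → ℝ} (hf : Continuous f)
    (heven : ∀ x, f (-x) = f x) (T : ℝ) :
    ∫ x in -T..T, f x = 2 * ∫ x in 0..T, f x := by
  have hneg : ∫ x in -T..0, f x = ∫ x in 0..T, f x := by
    simpa [heven] using (intervalIntegral.integral_comp_neg (a := 0) (b := T) f).symm
  rw [← intervalIntegral.integral_add_adjacent_intervals (hf.intervalIntegrable _ 0)
    (hf.intervalIntegrable 0 _), hneg, two_mul]

theorem intervalIntegral_comp_sub_le_of_even {f : ℝ → ℝ} (hf : Continuous f)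
    (heven : ∀ x, f (-x) = f x) (hf0 : ∀ x, 0 ≤ f x) {T u : ℝ} (hu : u ∈ Set.Icc 0 T) :
    ∫ s in 0..T, f (u - s) ≤ 2 * ∫ s in 0..T, f s := by
  rw [intervalIntegral.integral_comp_sub_left, sub_zero,
    ← intervalIntegral_neg_self_of_even hf heven]
  exact intervalIntegral.integral_mono_interval (by linarith [hu.1]) (by linarith [hu.1, hu.2])
    hu.2 (.of_forall hf0) (hf.intervalIntegrable _ _)

theorem intervalIntegral_integral_comp_sub_le {f g : ℝ → ℝ} (hf : Continuous f)
    (hg : Continuous g) (heven : ∀ x, f (-x) = f x) (hf0 : ∀ x, 0 ≤ f x) (hgf : ∀ x, g x ≤ f x)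
    {T : ℝ} (hT : 0 ≤ T) :
    ∫ u₁ in 0..T, ∫ u₂ in 0..T, g (u₁ - u₂) ≤ T * (2 * ∫ s in 0..T, f s) := by
  have hinner : Continuous fun u₁ => ∫ u₂ in 0..T, g (u₁ - u₂) :=
    intervalIntegral.continuous_parametric_intervalIntegral_of_continuous' (by fun_prop) _ _
  calc ∫ u₁ in 0..T, ∫ u₂ in 0..T, g (u₁ - u₂)
      ≤ ∫ _ in 0..T, 2 * ∫ s in 0..T, f s := by
        refine intervalIntegral.integral_mono_on hT (hinner.intervalIntegrable _ _)
          intervalIntegrable_const fun u hu => ?_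
        calc ∫ u₂ in 0..T, g (u - u₂) ≤ ∫ u₂ in 0..T, f (u - u₂) :=
              intervalIntegral.integral_mono_on hT
                ((hg.comp (continuous_sub_left u)).intervalIntegrable _ _)
                ((hf.comp (continuous_sub_left u)).intervalIntegrable _ _) fun _ _ => hgf _
          _ ≤ 2 * ∫ s in 0..T, f s := intervalIntegral_comp_sub_le_of_even hf heven hf0 hu
    _ = T * (2 * ∫ s in 0..T, f s) := by
        rw [intervalIntegral.integral_const, smul_eq_mul, sub_zero]

theorem iSup_integral_integral_abs_pow_le {r : ℝ → ℝ} (hcont : Continuous r)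
    (heven : ∀ u, r (-u) = r u) (hbd : ∀ u, |r u| ≤ 1) (n : ℕ) {T : ℝ} (hT : 0 ≤ T) :
    ⨆ m : {m : ℕ // n ≤ m}, ∫ u₁ in 0..T, ∫ u₂ in 0..T, |r (u₁ - u₂)| ^ (m : ℕ)
      ≤ T * (2 * ∫ s in 0..T, |r s| ^ n) := by
  have : Nonempty {m : ℕ // n ≤ m} := ⟨⟨n, le_rfl⟩⟩
  refine ciSup_le fun ⟨m, hm⟩ => intervalIntegral_integral_comp_sub_le
    (f := fun s => |r s| ^ n) (g := fun s => |r s| ^ m) (by fun_prop) (by fun_prop)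
    (fun x => by rw [heven]) (fun x => by positivity) (fun x => ?_) hT
  exact pow_le_pow_of_le_one (abs_nonneg _) (hbd x) hm

theorem iSup_integral_integral_abs_pow_nonneg (r : ℝ → ℝ) (n : ℕ) {T : ℝ} (hT : 0 ≤ T) :
    0 ≤ ⨆ m : {m : ℕ // n ≤ m}, ∫ u₁ in 0..T, ∫ u₂ in 0..T, |r (u₁ - u₂)| ^ (m : ℕ) :=
  Real.iSup_nonneg fun _ => intervalIntegral.integral_nonneg hT fun _ _ =>
    intervalIntegral.integral_nonneg hT fun _ _ => by positivity

theorem iSup_integral_integral_abs_pow_isBigO {r : ℝ → ℝ} (hcont : Continuous r)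
    (heven : ∀ u, r (-u) = r u) (hbd : ∀ u, |r u| ≤ 1) (n : ℕ) {v : ℝ} (hv : 0 < v) :
    (fun t => ⨆ m : {m : ℕ // n ≤ m},
        ∫ u₁ in 0..(v * t), ∫ u₂ in 0..(v * t), |r (u₁ - u₂)| ^ (m : ℕ))
      =O[atTop] fun t => t * ∫ s in 0..(v * t), |r s| ^ n := by
  refine IsBigO.of_bound (2 * v) ((eventually_ge_atTop 0).mono fun t ht => ?_)
  have hvt : 0 ≤ v * t := by positivity
  have hI : 0 ≤ ∫ s in 0..(v * t), |r s| ^ n :=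
    intervalIntegral.integral_nonneg hvt fun _ _ => by positivity
  rw [Real.norm_of_nonneg (iSup_integral_integral_abs_pow_nonneg r n hvt),
    Real.norm_of_nonneg (by positivity)]
  linarith [iSup_integral_integral_abs_pow_le hcont heven hbd n hvt]

theorem Asymptotics.IsLittleO.intervalIntegral_primitive {f g : ℝ → ℝ} (h : f =o[atTop] g)
    (hf : LocallyIntegrable f) (hg : LocallyIntegrable g) (hg0 : ∀ x, 0 ≤ g x)
    (hgint : Tendsto (fun T => ∫ x in 0..T, g x) atTop atTop) :
    (fun T => ∫ x in 0..T, f x) =o[atTop] fun T => ∫ x in 0..T, g x := by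
  have hfi (a b : ℝ) : IntervalIntegrable f volume a b :=
    (hf.integrableOn_isCompact isCompact_uIcc).intervalIntegrable
  have hgi (a b : ℝ) : IntervalIntegrable g volume a b :=
    (hg.integrableOn_isCompact isCompact_uIcc).intervalIntegrable
  refine isLittleO_iff.2 fun ε hε => ?_
  obtain ⟨N, hN0, hN⟩ : ∃ N, 0 ≤ N ∧ ∀ x ≥ N, ‖f x‖ ≤ ε / 2 * g x := by
    obtain ⟨N, hN⟩ := eventually_atTop.1
      ((isLittleO_iff.1 h (half_pos hε)).and (eventually_ge_atTop 0))
    exact ⟨N, (hN N le_rfl).2, fun x hx => by simpa [abs_of_nonneg (hg0 x)] using (hN x hx).1⟩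
  have hhead : (fun _ : ℝ => ∫ x in 0..N, f x) =o[atTop] fun T => ∫ x in 0..T, g x :=
    isLittleO_const_left.2 (.inr (tendsto_norm_atTop_atTop.comp hgint))
  filter_upwards [isLittleO_iff.1 hhead (half_pos hε), eventually_ge_atTop N] with T hT hNT
  have hT0 : 0 ≤ T := hN0.trans hNT
  have hgT : 0 ≤ ∫ x in 0..T, g x := intervalIntegral.integral_nonneg hT0 fun x _ => hg0 x
  have htail : ‖∫ x in N..T, f x‖ ≤ ε / 2 * ∫ x in 0..T, g x := by
    calc ‖∫ x in N..T, f x‖ ≤ ∫ x in N..T, ε / 2 * g x :=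
          intervalIntegral.norm_integral_le_of_norm_le hNT (.of_forall fun x hx => hN x hx.1.le)
            ((hgi N T).const_mul _)
      _ = ε / 2 * ∫ x in N..T, g x := intervalIntegral.integral_const_mul _ _
      _ ≤ ε / 2 * ∫ x in 0..T, g x := by
          gcongr
          exact intervalIntegral.integral_mono_interval hN0 hNT le_rfl
            (.of_forall hg0) (hgi 0 T)
  rw [← intervalIntegral.integral_add_adjacent_intervals (hfi 0 N)
    (hfi N T), Real.norm_of_nonneg hgT]
  rw [Real.norm_of_nonneg hgT] at hT
  linarith [norm_add_le (∫ x in 0..N, f x) (∫ x in N..T, f x)]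

theorem intervalIntegral_abs_pow_succ_isLittleO {r : ℝ → ℝ} (hcont : Continuous r)
    (hzero : Tendsto r atTop (nhds 0)) (q : ℕ)
    (htop : Tendsto (fun T => ∫ s in 0..T, |r s| ^ q) atTop atTop) :
    (fun T => ∫ s in 0..T, |r s| ^ (q + 1)) =o[atTop] fun T => ∫ s in 0..T, |r s| ^ q := by
  have hpow : (fun x => |r x| ^ (q + 1)) =o[atTop] fun x => |r x| ^ q := by
    simpa [pow_succ', one_mul] using
      ((isLittleO_one_iff ℝ).2 (by simpa using hzero.abs)).mul_isBigO
        (isBigO_refl (fun x => |r x| ^ q) atTop)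
  exact hpow.intervalIntegral_primitive (by fun_prop : Continuous _).locallyIntegrable
    (by fun_prop : Continuous _).locallyIntegrable (fun x => by positivity) htop

theorem intervalIntegral_pow_le_abs_pow {r : ℝ → ℝ} (hcont : Continuous r) (q : ℕ) {t : ℝ}
    (ht : 0 ≤ t) : ∫ u in 0..t, r u ^ q ≤ ∫ u in 0..t, |r u| ^ q :=
  intervalIntegral.integral_mono_on ht ((hcont.pow q).intervalIntegrable _ _)
    ((hcont.abs.pow q).intervalIntegrable _ _)
    fun x _ => (abs_pow (r x) q).symm ▸ le_abs_self _

theorem Asymptotics.isBigO_of_isBoundedUnder_div {α : Type*} {l : Filter α} {f g : α → ℝ}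
    (hf : ∀ᶠ x in l, 0 ≤ f x) (hg : ∀ᶠ x in l, 0 < g x)
    (h : IsBoundedUnder (· ≤ ·) l fun x => f x / g x) : f =O[l] g := by
  refine (isBigO_iff_isBoundedUnder_le_div (hg.mono fun x hx => hx.ne')).2 ?_
  refine h.mono_le ?_
  filter_upwards [hf, hg] with x hfx hgx
  simp [abs_of_nonneg hfx, abs_of_pos hgx]

theorem stmt10_general (q : ℕ) (r : ℝ → ℝ) (hcont : Continuous r)
    (heven : ∀ u, r (-u) = r u) (hbd : ∀ u, |r u| ≤ 1)
    (hzero : Tendsto r atTop (nhds 0))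
    (L Labs : ℝ → ℝ)
    (hL : ∀ t, L t = ∫ u in (0:ℝ)..t, r u ^ q)
    (hLabs : ∀ t, Labs t = ∫ u in (0:ℝ)..t, |r u| ^ q)
    (hslowLabs : ∀ c > 0, Tendsto (fun t => Labs (c * t) / Labs t) atTop (nhds 1))
    (hinf : Tendsto L atTop atTop)
    (hbdd : IsBoundedUnder (· ≤ ·) atTop (fun t => Labs t / L t))
    (v : ℝ) (hv : 0 < v) :
    (fun t => ⨆ m : {m : ℕ // q + 1 ≤ m},
        ∫ u₁ in (0:ℝ)..(v * t), ∫ u₂ in (0:ℝ)..(v * t), |r (u₁ - u₂)| ^ (m : ℕ))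
      =o[atTop] (fun t => t * L t) := by
  have hLle : ∀ᶠ t in atTop, L t ≤ Labs t := (eventually_ge_atTop 0).mono fun t ht => by
    rw [hL, hLabs]; exact intervalIntegral_pow_le_abs_pow hcont q ht
  have hLabs_top : Tendsto Labs atTop atTop := tendsto_atTop_mono' _ hLle hinf
  have hLabs_slow : (fun t => Labs (v * t)) =O[atTop] Labs :=
    isBigO_of_div_tendsto_nhds ((hLabs_top.eventually_gt_atTop 0).mono fun t ht h0 =>
      absurd h0 ht.ne') 1 (hslowLabs v hv)
  have hLabs_L : Labs =O[atTop] L := isBigO_of_isBoundedUnder_div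
    (hLabs_top.eventually_ge_atTop 0) (hinf.eventually_gt_atTop 0) hbdd
  have hρ_Labs : (fun T => ∫ s in 0..T, |r s| ^ (q + 1)) =o[atTop] Labs := by
    rw [funext hLabs] at hLabs_top ⊢
    exact intervalIntegral_abs_pow_succ_isLittleO hcont hzero q hLabs_top
  have hρ : (fun t => ∫ s in 0..(v * t), |r s| ^ (q + 1)) =o[atTop] L :=
    (hρ_Labs.comp_tendsto (tendsto_id.const_mul_atTop hv)).trans_isBigO
      (hLabs_slow.trans hLabs_L)
  exact (iSup_integral_integral_abs_pow_isBigO hcont heven hbd (q + 1) hv).trans_isLittleO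
    ((isBigO_refl _ _).mul_isLittleO hρ)

/-- Let `q ≥ 1` and let `r` be even, continuous, bounded by one and tending to
zero at infinity. With `L t = ∫₀^t r(u)^q du` and `L|·| t = ∫₀^t |r u|^q du` both slowly varying
at infinity, `L t → ∞` and `limsup_{t→∞} L|·| t / L t < ∞`, for every `v > 0` the quantity
`M_t(v) = sup_{m ≥ q+1} ∫₀^{vt} ∫₀^{vt} |r(u₁−u₂)|^m du₁ du₂` satisfies `M_t(v) = o(t L t)`
as `t → ∞`. -/
theorem stmt10 (q : ℕ) (hq : 1 ≤ q) (r : ℝ → ℝ) (hcont : Continuous r)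
    (heven : ∀ u, r (-u) = r u) (hbd : ∀ u, |r u| ≤ 1)
    (hzero : Tendsto r atTop (nhds 0))
    (L Labs : ℝ → ℝ)
    (hL : ∀ t, L t = ∫ u in (0:ℝ)..t, r u ^ q)
    (hLabs : ∀ t, Labs t = ∫ u in (0:ℝ)..t, |r u| ^ q)
    (hslowL : ∀ c > 0, Tendsto (fun t => L (c * t) / L t) atTop (nhds 1))
    (hslowLabs : ∀ c > 0, Tendsto (fun t => Labs (c * t) / Labs t) atTop (nhds 1))
    (hinf : Tendsto L atTop atTop)
    (hbdd : IsBoundedUnder (· ≤ ·) atTop (fun t => Labs t / L t))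
    (v : ℝ) (hv : 0 < v) :
    (fun t => ⨆ m : {m : ℕ // q + 1 ≤ m},
        ∫ u₁ in (0:ℝ)..(v * t), ∫ u₂ in (0:ℝ)..(v * t), |r (u₁ - u₂)| ^ (m : ℕ))
      =o[atTop] (fun t => t * L t) :=
  stmt10_general q r hcont heven hbd hzero L Labs hL hLabs hslowLabs hinf hbdd v hv
end

section
/- Fix H ∈ (0, 1). Then lim_{γ → ∞} ∫₀^∞ e^{−t} ∫₀^γ e^{−s} · (1/2) [ γ^{2H} − (γ − s)^{2H} − |t − γ|^{2H} + |γ − s − t|^{2H} ] ds dt = 0. (Equivalently, for a fractional Brownian motion B^H, E[ (∫₀^∞ e^{−t} B^H_t dt)(∫₀^γ e^{−s}(B^H_γ − B^H_{γ−s}) ds) ] → 0 as γ → ∞.) -/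
open MeasureTheory Filter Set Real Topology

/-!
Write `p = 2H`. For `0 ≤ s ≤ γ`, twice the integrand is the second difference
`f γ - f (γ - s) - f (γ - t) + f (γ - s - t)` of `f x = |x| ^ p`. It is bounded uniformly in `γ`:
by `2 s ^ p` when `p ≤ 1`, since `f` is `p`-Hölder, and by `2 p t ^ (p - 1) s` when `p > 1`, by the
mean value theorem and the `(p - 1)`-Hölder continuity of `f'`. Once `γ > s + t` the mean value
theorem applied twice bounds it by `|p (p - 1)| s t (γ - s - t) ^ (p - 2)`, which tends to `0`
because `p < 2`. Dominated convergence, first in `s` and then in `t`, gives the limit.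
-/

lemma abs_rpow_sub_rpow_le {p x y : ℝ} (hp0 : 0 ≤ p) (hp1 : p ≤ 1) (hx : 0 ≤ x) (hy : 0 ≤ y) :
    |x ^ p - y ^ p| ≤ |x - y| ^ p := by
  wlog hyx : y ≤ x generalizing x y
  · rw [abs_sub_comm, abs_sub_comm x]
    exact this hy hx (le_of_not_ge hyx)
  have hsub : x ^ p ≤ y ^ p + (x - y) ^ p := by
    simpa using rpow_add_le_add_rpow hy (sub_nonneg.2 hyx) hp0 hp1
  rw [abs_of_nonneg (sub_nonneg.2 (rpow_le_rpow hy hyx hp0)), abs_of_nonneg (sub_nonneg.2 hyx)]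
  linarith

lemma abs_abs_rpow_sub_abs_rpow_le {p x y : ℝ} (hp0 : 0 ≤ p) (hp1 : p ≤ 1) :
    |(|x| ^ p - |y| ^ p)| ≤ |x - y| ^ p :=
  (abs_rpow_sub_rpow_le hp0 hp1 (abs_nonneg x) (abs_nonneg y)).trans
    (rpow_le_rpow (abs_nonneg _) (abs_abs_sub_abs_le_abs_sub x y) hp0)

lemma rpow_le_one_add {p x : ℝ} (hp0 : 0 ≤ p) (hp1 : p ≤ 1) (hx : 0 ≤ x) : x ^ p ≤ 1 + x := by
  rcases le_total x 1 with h | h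
  · linarith [rpow_le_one hx h hp0]
  · linarith [rpow_le_self_of_one_le h hp1]

lemma abs_rpow_sub_one_mul_self_of_nonneg {q x : ℝ} (hq : 0 < q) (hx : 0 ≤ x) :
    |x| ^ (q - 1) * x = x ^ q := by
  rcases hx.eq_or_lt with rfl | hx
  · simp [zero_rpow hq.ne']
  · rw [abs_of_pos hx, rpow_sub_one hx.ne', div_mul_cancel₀ _ hx.ne']

lemma abs_rpow_sub_one_mul_self_of_nonpos {q x : ℝ} (hq : 0 < q) (hx : x ≤ 0) :
    |x| ^ (q - 1) * x = -(-x) ^ q := by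
  rw [← abs_rpow_sub_one_mul_self_of_nonneg hq (neg_nonneg.2 hx), abs_neg]
  ring

lemma abs_abs_rpow_sub_one_mul_self_sub_le {q x y : ℝ} (hq0 : 0 < q) (hq1 : q ≤ 1) :
    |(|x| ^ (q - 1) * x - |y| ^ (q - 1) * y)| ≤ 2 * |x - y| ^ q := by
  wlog hyx : y ≤ x generalizing x y
  · rw [abs_sub_comm, abs_sub_comm x]
    exact this (le_of_not_ge hyx)
  have hxy : 0 ≤ |x - y| ^ q := by positivity
  rcases le_total 0 y with hy | hy
  · rw [abs_rpow_sub_one_mul_self_of_nonneg hq0 hy,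
      abs_rpow_sub_one_mul_self_of_nonneg hq0 (hy.trans hyx)]
    linarith [abs_rpow_sub_rpow_le hq0.le hq1 (hy.trans hyx) hy]
  rcases le_total x 0 with hx | hx
  · rw [abs_rpow_sub_one_mul_self_of_nonpos hq0 hx, abs_rpow_sub_one_mul_self_of_nonpos hq0 hy,
      neg_sub_neg]
    have h := abs_rpow_sub_rpow_le hq0.le hq1 (neg_nonneg.2 hy) (neg_nonneg.2 hx)
    rw [show -y - -x = x - y by ring] at h
    linarith
  · rw [abs_rpow_sub_one_mul_self_of_nonneg hq0 hx, abs_rpow_sub_one_mul_self_of_nonpos hq0 hy,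
      sub_neg_eq_add,
      abs_of_nonneg (add_nonneg (rpow_nonneg hx _) (rpow_nonneg (neg_nonneg.2 hy) _)),
      abs_of_nonneg (by linarith)]
    have hx' : x ^ q ≤ (x - y) ^ q := rpow_le_rpow hx (by linarith) hq0.le
    have hy' : (-y) ^ q ≤ (x - y) ^ q := rpow_le_rpow (by linarith) (by linarith) hq0.le
    linarith

lemma abs_sub_le_of_hasDerivAt {f f' : ℝ → ℝ} {a b M : ℝ} (hab : a ≤ b)
    (hf : ∀ y ∈ Icc a b, HasDerivAt f (f' y) y) (hM : ∀ y ∈ Icc a b, |f' y| ≤ M) :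
    |f b - f a| ≤ M * (b - a) := by
  simpa [Real.norm_eq_abs, abs_of_nonneg (sub_nonneg.2 hab)] using
    (convex_Icc a b).norm_image_sub_le_of_norm_hasDerivWithin_le
      (fun y hy => (hf y hy).hasDerivWithinAt) hM (left_mem_Icc.2 hab) (right_mem_Icc.2 hab)

def secondDiff (f : ℝ → ℝ) (x s t : ℝ) : ℝ := f x - f (x - s) - f (x - t) + f (x - s - t)

lemma abs_secondDiff_le {f f' : ℝ → ℝ} {x s t M : ℝ} (hs : 0 ≤ s) (ht : 0 ≤ t)
    (hf : ∀ y ∈ Icc (x - s - t) x, HasDerivAt f (f' y) y)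
    (hM : ∀ y ∈ Icc (x - s) x, |f' y - f' (y - t)| ≤ M) :
    |secondDiff f x s t| ≤ M * s := by
  have hg : ∀ y ∈ Icc (x - s) x,
      HasDerivAt (fun y => f y - f (y - t)) (f' y - f' (y - t)) y := fun y hy =>
    (hf y ⟨by linarith [hy.1], hy.2⟩).sub
      ((hf (y - t) ⟨by linarith [hy.1], by linarith [hy.2]⟩).comp_sub_const y t)
  have h := abs_sub_le_of_hasDerivAt (by linarith) hg hM
  rw [sub_sub_cancel] at h
  convert h using 2
  simp only [secondDiff]
  ring

lemma abs_secondDiff_abs_rpow_le_of_le_one {p x s t : ℝ} (hp0 : 0 ≤ p) (hp1 : p ≤ 1)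
    (hs : 0 ≤ s) : |secondDiff (fun y => |y| ^ p) x s t| ≤ 2 * s ^ p := by
  have h₁ := abs_abs_rpow_sub_abs_rpow_le (x := x) (y := x - s) hp0 hp1
  have h₂ := abs_abs_rpow_sub_abs_rpow_le (x := x - t) (y := x - s - t) hp0 hp1
  rw [sub_sub_cancel, abs_of_nonneg hs] at h₁
  rw [show x - t - (x - s - t) = s by ring, abs_of_nonneg hs] at h₂
  calc |secondDiff (fun y => |y| ^ p) x s t|
      = |(|x| ^ p - |x - s| ^ p) - (|x - t| ^ p - |x - s - t| ^ p)| := by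
        simp only [secondDiff]; ring_nf
    _ ≤ _ := (abs_sub _ _).trans (by linarith)

lemma abs_secondDiff_abs_rpow_le_of_one_lt {p x s t : ℝ} (hp1 : 1 < p) (hp2 : p ≤ 2)
    (hs : 0 ≤ s) (ht : 0 ≤ t) :
    |secondDiff (fun y => |y| ^ p) x s t| ≤ 2 * p * t ^ (p - 1) * s := by
  refine abs_secondDiff_le hs ht (fun y _ => hasDerivAt_abs_rpow y hp1) fun y _ => ?_
  have h := abs_abs_rpow_sub_one_mul_self_sub_le (x := y) (y := y - t)
    (by linarith : 0 < p - 1) (by linarith)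
  rw [sub_sub_cancel, abs_of_nonneg ht, show p - 1 - 1 = p - 2 by ring] at h
  rw [mul_assoc, mul_assoc, ← mul_sub, abs_mul, abs_of_pos (by linarith)]
  nlinarith

lemma abs_secondDiff_rpow_le {p x s t : ℝ} (hp : p ≤ 2) (hs : 0 ≤ s) (ht : 0 ≤ t)
    (hx : 0 < x - s - t) :
    |secondDiff (fun y => y ^ p) x s t| ≤ |p * (p - 1)| * (x - s - t) ^ (p - 2) * t * s := by
  refine abs_secondDiff_le hs ht
    (fun y hy => hasDerivAt_rpow_const (Or.inl (hx.trans_le hy.1).ne')) fun y hy => ?_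
  have h := abs_sub_le_of_hasDerivAt (f := fun z => p * z ^ (p - 1))
    (f' := fun z => p * ((p - 1) * z ^ (p - 1 - 1))) (M := |p * (p - 1)| * (x - s - t) ^ (p - 2))
    (by linarith : y - t ≤ y) (fun z hz => ?_) (fun z hz => ?_)
  · rwa [sub_sub_cancel] at h
  · have hz0 : 0 < z := by linarith [hy.1, hz.1]
    exact (hasDerivAt_rpow_const (Or.inl hz0.ne')).const_mul p
  · have hz0 : x - s - t ≤ z := by linarith [hy.1, hz.1]
    rw [← mul_assoc, abs_mul, abs_of_pos (rpow_pos_of_pos (hx.trans_le hz0) _),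
      show p - 1 - 1 = p - 2 by ring]
    exact mul_le_mul_of_nonneg_left (rpow_le_rpow_of_nonpos hx hz0 (by linarith)) (abs_nonneg _)

/-- `E B^H_t (B^H_γ - B^H_{γ-s})` with `p = 2H`. -/
noncomputable def fbmIncrementCov (p γ s t : ℝ) : ℝ :=
  (γ ^ p - (γ - s) ^ p - |t - γ| ^ p + |γ - s - t| ^ p) / 2

lemma two_mul_fbmIncrementCov {p γ s t : ℝ} (hs : 0 ≤ s) (hsγ : s ≤ γ) :
    2 * fbmIncrementCov p γ s t = secondDiff (fun y => |y| ^ p) γ s t := by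
  rw [fbmIncrementCov, secondDiff, abs_of_nonneg (hs.trans hsγ),
    abs_of_nonneg (sub_nonneg.2 hsγ), abs_sub_comm t γ]
  ring

lemma abs_fbmIncrementCov_le {p γ s t : ℝ} (hp0 : 0 ≤ p) (hp2 : p ≤ 2) (hs : 0 ≤ s)
    (hsγ : s ≤ γ) (ht : 0 ≤ t) : |fbmIncrementCov p γ s t| ≤ 2 * (1 + s) * (1 + t) := by
  have h := two_mul_fbmIncrementCov (p := p) (t := t) hs hsγ
  rcases le_or_gt p 1 with hp1 | hp1
  · have hK := abs_secondDiff_abs_rpow_le_of_le_one (x := γ) (t := t) hp0 hp1 hs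
    have hsp := rpow_le_one_add hp0 hp1 hs
    rw [← h, abs_mul, abs_two] at hK
    nlinarith
  · have hK := abs_secondDiff_abs_rpow_le_of_one_lt (x := γ) hp1 hp2 hs ht
    have htp := rpow_le_one_add (by linarith : 0 ≤ p - 1) (by linarith) ht
    rw [← h, abs_mul, abs_two] at hK
    have : p * t ^ (p - 1) ≤ 2 * (1 + t) := by
      nlinarith [rpow_nonneg ht (p - 1)]
    nlinarith

lemma tendsto_fbmIncrementCov_atTop {p s t : ℝ} (hp : p < 2) (hs : 0 ≤ s) (ht : 0 ≤ t) :
    Tendsto (fun γ => fbmIncrementCov p γ s t) atTop (𝓝 0) := by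
  have hdecay : Tendsto (fun γ => |p * (p - 1)| * t * s / 2 * (γ - s - t) ^ (p - 2))
      atTop (𝓝 0) := by
    have h := ((tendsto_rpow_neg_atTop (by linarith : 0 < 2 - p)).comp
      (tendsto_atTop_add_const_right atTop (-(s + t)) tendsto_id)).const_mul
        (|p * (p - 1)| * t * s / 2)
    rw [mul_zero] at h
    refine h.congr fun γ => ?_
    rw [Function.comp_apply, id, show γ + -(s + t) = γ - s - t by ring, neg_sub]
  refine squeeze_zero_norm' ?_ hdecay
  filter_upwards [eventually_gt_atTop (s + t)] with γ hγ
  have hK := abs_secondDiff_rpow_le (x := γ) hp.le hs ht (by linarith)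
  have h : 2 * fbmIncrementCov p γ s t = secondDiff (fun y => y ^ p) γ s t := by
    rw [fbmIncrementCov, secondDiff, abs_sub_comm t γ, abs_of_pos (by linarith : 0 < γ - t),
      abs_of_pos (by linarith : 0 < γ - s - t)]
    ring
  rw [← h, abs_mul, abs_two] at hK
  rw [Real.norm_eq_abs]
  linarith

lemma tendsto_intervalIntegral_of_dominated {F : ℝ → ℝ → ℝ} {f g : ℝ → ℝ}
    (hF : ∀ γ, AEStronglyMeasurable (F γ) (volume.restrict (Ioi 0)))
    (hg : IntegrableOn g (Ioi 0)) (hbound : ∀ γ, ∀ s ∈ Ioc 0 γ, |F γ s| ≤ g s)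
    (hlim : ∀ s > 0, Tendsto (fun γ => F γ s) atTop (𝓝 (f s))) :
    Tendsto (fun γ => ∫ s in 0..γ, F γ s) atTop (𝓝 (∫ s in Ioi 0, f s)) := by
  have h := tendsto_integral_filter_of_dominated_convergence (μ := volume.restrict (Ioi 0))
    (F := fun γ => (Ioc 0 γ).indicator (F γ)) (l := atTop) g
    (Eventually.of_forall fun γ => (hF γ).indicator measurableSet_Ioc)
    (Eventually.of_forall fun γ => (ae_restrict_mem measurableSet_Ioi).mono fun s hs => by
      by_cases hsγ : s ∈ Ioc 0 γ
      · simpa [indicator_of_mem hsγ] using hbound γ s hsγ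
      · simpa [indicator_of_notMem hsγ] using (abs_nonneg _).trans (hbound s s ⟨hs, le_rfl⟩))
    hg
    ((ae_restrict_mem measurableSet_Ioi).mono fun s hs => (hlim s hs).congr' <| by
      filter_upwards [eventually_ge_atTop s] with γ hγ
      rw [indicator_of_mem (show s ∈ Ioc 0 γ from ⟨hs, hγ⟩)])
  refine h.congr' ?_
  filter_upwards [eventually_ge_atTop 0] with γ hγ
  rw [integral_indicator measurableSet_Ioc, Measure.restrict_restrict measurableSet_Ioc,
    inter_eq_self_of_subset_left Ioc_subset_Ioi_self, intervalIntegral.integral_of_le hγ]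

lemma abs_intervalIntegral_le_of_dominated {F g : ℝ → ℝ} {γ : ℝ} (hγ : 0 ≤ γ)
    (hg : IntegrableOn g (Ioi 0)) (hg0 : ∀ s > 0, 0 ≤ g s)
    (hbound : ∀ s ∈ Ioc 0 γ, |F s| ≤ g s) :
    |∫ s in 0..γ, F s| ≤ ∫ s in Ioi 0, g s := by
  calc |∫ s in 0..γ, F s| ≤ ∫ s in 0..γ, g s :=
        intervalIntegral.norm_integral_le_of_norm_le (f := F) hγ (Eventually.of_forall hbound)
          ((intervalIntegrable_iff_integrableOn_Ioc_of_le hγ).2 (hg.mono_set Ioc_subset_Ioi_self))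
    _ = ∫ s in Ioc 0 γ, g s := intervalIntegral.integral_of_le hγ
    _ ≤ ∫ s in Ioi 0, g s :=
        setIntegral_mono_set hg ((ae_restrict_mem measurableSet_Ioi).mono hg0)
          Ioc_subset_Ioi_self.eventuallyLE

lemma integrableOn_exp_neg_mul_one_add :
    IntegrableOn (fun x : ℝ => exp (-x) * (1 + x)) (Ioi 0) := by
  refine ((exp_neg_integrableOn_Ioi 0 one_pos).add (GammaIntegral_convergent two_pos)).congr_fun
    (fun x _ => ?_) measurableSet_Ioi
  norm_num
  ring

lemma continuous_exp_neg_mul_fbmIncrementCov {p : ℝ} (hp : 0 ≤ p) (γ : ℝ) :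
    Continuous fun q : ℝ × ℝ => exp (-q.2) * fbmIncrementCov p γ q.2 q.1 := by
  unfold fbmIncrementCov
  fun_prop (disch := exact Or.inr hp)

lemma abs_exp_neg_mul_fbmIncrementCov_le {p γ s t : ℝ} (hp0 : 0 ≤ p) (hp2 : p ≤ 2)
    (hs : 0 ≤ s) (hsγ : s ≤ γ) (ht : 0 ≤ t) :
    |exp (-s) * fbmIncrementCov p γ s t| ≤ 2 * (1 + t) * (exp (-s) * (1 + s)) := by
  rw [abs_mul, abs_of_pos (exp_pos _)]
  calc exp (-s) * |fbmIncrementCov p γ s t| ≤ exp (-s) * (2 * (1 + s) * (1 + t)) :=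
        mul_le_mul_of_nonneg_left (abs_fbmIncrementCov_le hp0 hp2 hs hsγ ht) (exp_pos _).le
    _ = 2 * (1 + t) * (exp (-s) * (1 + s)) := by ring

lemma tendsto_integral_exp_neg_mul_fbmIncrementCov {p t : ℝ} (hp0 : 0 ≤ p) (hp2 : p < 2)
    (ht : 0 ≤ t) :
    Tendsto (fun γ => ∫ s in 0..γ, exp (-s) * fbmIncrementCov p γ s t) atTop (𝓝 0) := by
  simpa using tendsto_intervalIntegral_of_dominated (f := fun _ => 0)
    (fun γ => ((continuous_exp_neg_mul_fbmIncrementCov hp0 γ).comp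
      (Continuous.prodMk_right t)).aestronglyMeasurable)
    (integrableOn_exp_neg_mul_one_add.const_mul (2 * (1 + t)))
    (fun γ s hs => abs_exp_neg_mul_fbmIncrementCov_le hp0 hp2.le hs.1.le hs.2 ht)
    (fun s hs => by simpa using (tendsto_fbmIncrementCov_atTop hp2 hs.le ht).const_mul (exp (-s)))

lemma abs_exp_neg_mul_integral_fbmIncrementCov_le {p γ t : ℝ} (hp0 : 0 ≤ p) (hp2 : p ≤ 2)
    (hγ : 0 ≤ γ) (ht : 0 ≤ t) :
    |exp (-t) * ∫ s in 0..γ, exp (-s) * fbmIncrementCov p γ s t|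
      ≤ 2 * (∫ s in Ioi 0, exp (-s) * (1 + s)) * (exp (-t) * (1 + t)) := by
  have hI := abs_intervalIntegral_le_of_dominated hγ
    (integrableOn_exp_neg_mul_one_add.const_mul (2 * (1 + t))) (fun s _ => by positivity)
    (fun s hs => abs_exp_neg_mul_fbmIncrementCov_le hp0 hp2 hs.1.le hs.2 ht)
  rw [integral_const_mul] at hI
  rw [abs_mul, abs_of_pos (exp_pos _)]
  calc _ ≤ exp (-t) * (2 * (1 + t) * ∫ s in Ioi 0, exp (-s) * (1 + s)) :=
        mul_le_mul_of_nonneg_left hI (exp_pos _).le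
    _ = _ := by ring

/-- For `H ∈ (0,1)`,
`∫₀^∞ e^{−t} ∫₀^γ e^{−s} (1/2)[γ^{2H} − (γ−s)^{2H} − |t−γ|^{2H} + |γ−s−t|^{2H}] ds dt → 0`
as `γ → ∞` (i.e. `E[(∫₀^∞ e^{−t} B^H_t dt)(∫₀^γ e^{−s}(B^H_γ − B^H_{γ−s}) ds)] → 0`). -/
theorem stmt13 (H : ℝ) (hH : H ∈ Set.Ioo (0:ℝ) 1) :
    Tendsto
      (fun γ : ℝ =>
        ∫ t in Set.Ioi (0:ℝ), Real.exp (-t) *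
          ∫ s in (0:ℝ)..γ, Real.exp (-s) *
            ((γ ^ (2 * H) - (γ - s) ^ (2 * H) - |t - γ| ^ (2 * H) + |γ - s - t| ^ (2 * H)) / 2))
      atTop (nhds 0) := by
  show Tendsto (fun γ => ∫ t in Ioi 0, exp (-t) * ∫ s in 0..γ,
    exp (-s) * fbmIncrementCov (2 * H) γ s t) atTop (𝓝 0)
  have hp0 : 0 ≤ 2 * H := by linarith [hH.1]
  have hp2 : 2 * H < 2 := by linarith [hH.2]
  simpa using tendsto_integral_filter_of_dominated_convergence (μ := volume.restrict (Ioi 0))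
    (F := fun γ t => exp (-t) * ∫ s in 0..γ, exp (-s) * fbmIncrementCov (2 * H) γ s t)
    (f := fun _ => 0) _
    (Eventually.of_forall fun γ => (continuous_exp.comp continuous_neg |>.mul
      (intervalIntegral.continuous_parametric_intervalIntegral_of_continuous'
        (continuous_exp_neg_mul_fbmIncrementCov hp0 γ) 0 γ)).aestronglyMeasurable)
    ((eventually_ge_atTop 0).mono fun γ hγ => (ae_restrict_mem measurableSet_Ioi).mono fun t ht =>
      abs_exp_neg_mul_integral_fbmIncrementCov_le hp0 hp2.le hγ (le_of_lt ht))
    (integrableOn_exp_neg_mul_one_add.const_mul _)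
    ((ae_restrict_mem measurableSet_Ioi).mono fun t ht => by
      simpa using (tendsto_integral_exp_neg_mul_fbmIncrementCov hp0 hp2 ht.le).const_mul (exp (-t)))
end
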